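/- arXiv:2302.09408 — 2 statements merged into one kernel-verified Lean document; each statement's English description precedes it below -/
import Mathlib

section
/- Consider an episodic layered MDP with true transition kernel P, horizon H, |𝒮| = S states and |𝒜| = A actions. There is an absolute constant c > 0 with the following property. Let π be any policy, let ι > 0, let n : 𝒮 × 𝒜 → ℝ_{≥1}, and let P̃ be any transition kernel respecting the layered structure such that for every consecutive-layer triple (u,v,w) ∈ ∪_{h=0}^{H−1} 𝒮_h × 𝒜 × 𝒮_{h+1}, | P̃(w|u,v) − P(w|u,v) | ≤ min{ 4√(P(w|u,v) ι / n(u,v)) + 40ι/(3 n(u,v)), 1 }. Then for every state s, | μ^{P,π}(s) − μ^{P̃,π}(s) | ≤ c ( Σ_{(u,v,w)} μ^{P,π}(u,v) √(P(w|u,v) ι / n(u,v)) μ^{P,π}(s|w) + H S² Σ_{(u,v)} μ^{P,π}(u,v) ι / n(u,v) ), where the first sum ranges over consecutive-layer triples (u,v,w) and the second over all state-action pairs (u,v). -/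
set_option linter.unusedSectionVars false
set_option maxHeartbeats 4000000


open Finset

/-- An episodic layered MDP skeleton: a finite state set partitioned into layers
`0, 1, …, H`, with a unique initial state `s0` on layer `0` and a unique terminal
state `sH` on layer `H`. -/
structure LayeredMDP (S : Type*) [Fintype S] where
  /-- the horizon -/
  H : ℕ
  /-- the layer of each state -/
  layer : S → ℕ
  layer_le : ∀ s, layer s ≤ H
  /-- the initial state -/
  s0 : S
  /-- the terminal state -/
  sH : S
  layer_s0 : layer s0 = 0
  layer_sH : layer sH = H
  init_unique : ∀ s, layer s = 0 → s = s0
  final_unique : ∀ s, layer s = H → s = sH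

variable {S A : Type*} [Fintype S] [Fintype A] [DecidableEq S]

/-- `P` is a transition kernel respecting the layered structure: `P s a` is a
probability distribution (for non-terminal layers) supported on the next layer. -/
def IsTransitionKernel (M : LayeredMDP S) (P : S → A → S → ℝ) : Prop :=
  (∀ s a s', 0 ≤ P s a s') ∧
  (∀ s a, M.layer s < M.H → ∑ s', P s a s' = 1) ∧
  (∀ s a s', P s a s' ≠ 0 → M.layer s' = M.layer s + 1)

/-- `π` is a policy: `π s` is a probability distribution over actions for each state. -/
def IsPolicy (π : S → A → ℝ) : Prop :=
  (∀ s a, 0 ≤ π s a) ∧ ∀ s, ∑ a, π s a = 1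

/-- The state distribution after `h` steps, starting from the initial state `s0`,
following policy `π` under transition kernel `P`. -/
noncomputable def occLayer (M : LayeredMDP S) (P : S → A → S → ℝ) (π : S → A → ℝ) :
    ℕ → S → ℝ
  | 0 => fun s => if s = M.s0 then 1 else 0
  | h + 1 => fun s => ∑ u : S, ∑ a : A, occLayer M P π h u * π u a * P u a s

/-- The occupancy measure `μ^{P,π}(s)`: the probability that the trajectory visits
state `s` (states on layer `h` can only be visited at step `h`). -/
noncomputable def occ (M : LayeredMDP S) (P : S → A → S → ℝ) (π : S → A → ℝ)
    (s : S) : ℝ :=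
  occLayer M P π (M.layer s) s

/-- The state-action occupancy measure `μ^{P,π}(s,a)`. -/
noncomputable def occSA (M : LayeredMDP S) (P : S → A → S → ℝ) (π : S → A → ℝ)
    (s : S) (a : A) : ℝ :=
  occ M P π s * π s a

/-- The state distribution after `k` steps started from state `w`, following policy
`π` under transition kernel `P`. -/
noncomputable def reachLayer (M : LayeredMDP S) (P : S → A → S → ℝ) (π : S → A → ℝ)
    (w : S) : ℕ → S → ℝ
  | 0 => fun s => if s = w then 1 else 0
  | k + 1 => fun s => ∑ u : S, ∑ a : A, reachLayer M P π w k u * π u a * P u a s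

/-- The conditional occupancy `μ^{P,π}(s | w)`: the probability of visiting `s` given
that the trajectory is at state `w` (equal to `1` if `s = w`, and `0` if `s ≠ w` lies
in a layer at or below that of `w`). -/
noncomputable def condOcc (M : LayeredMDP S) (P : S → A → S → ℝ) (π : S → A → ℝ)
    (w s : S) : ℝ :=
  if M.layer w ≤ M.layer s then reachLayer M P π w (M.layer s - M.layer w) s else 0

/-- The value function with `k` remaining steps:
`Vdepth 0 s = 0` and `Vdepth (k+1) s = ∑ a, π(a|s) (ℓ(s,a) + ∑ s', P(s'|s,a) Vdepth k s')`. -/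
noncomputable def Vdepth (M : LayeredMDP S) (P : S → A → S → ℝ) (π : S → A → ℝ)
    (ℓ : S → A → ℝ) : ℕ → S → ℝ
  | 0 => fun _ => 0
  | k + 1 => fun s => ∑ a : A, π s a * (ℓ s a + ∑ s' : S, P s a s' * Vdepth M P π ℓ k s')

/-- The state value function `V^{P,π}(s; ℓ)`. -/
noncomputable def Vval (M : LayeredMDP S) (P : S → A → S → ℝ) (π : S → A → ℝ)
    (ℓ : S → A → ℝ) (s : S) : ℝ :=
  Vdepth M P π ℓ (M.H - M.layer s) s

/-- The state-action value function `Q^{P,π}(s,a; ℓ)`. -/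
noncomputable def Qval (M : LayeredMDP S) (P : S → A → S → ℝ) (π : S → A → ℝ)
    (ℓ : S → A → ℝ) (s : S) (a : A) : ℝ :=
  ℓ s a + ∑ s' : S, P s a s' * Vval M P π ℓ s'

namespace OPB

/-- one-step forward operator -/
noncomputable def step (P : S → A → S → ℝ) (π : S → A → ℝ) (f : S → ℝ) : S → ℝ :=
  fun s => ∑ u : S, ∑ a : A, f u * π u a * P u a s

variable (M : LayeredMDP S)

lemma reach_zero (P : S → A → S → ℝ) (π : S → A → ℝ) (w : S) :
    reachLayer M P π w 0 = fun s => if s = w then 1 else 0 := rfl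

lemma reach_succ (P : S → A → S → ℝ) (π : S → A → ℝ) (w : S) (k : ℕ) :
    reachLayer M P π w (k+1) = step P π (reachLayer M P π w k) := rfl

lemma step_const_mul (P : S → A → S → ℝ) (π : S → A → ℝ) (c : ℝ) (f : S → ℝ) (s : S) :
    step P π (fun u => c * f u) s = c * step P π f s := by
  unfold step
  rw [Finset.mul_sum]
  refine Finset.sum_congr rfl fun u _ => ?_
  rw [Finset.mul_sum]
  exact Finset.sum_congr rfl fun a _ => by ring

lemma step_sum {γ : Type*} (P : S → A → S → ℝ) (π : S → A → ℝ) (t : Finset γ)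
    (F : γ → S → ℝ) (s : S) :
    step P π (fun u => ∑ i ∈ t, F i u) s = ∑ i ∈ t, step P π (F i) s := by
  unfold step
  simp only [Finset.sum_mul]
  calc (∑ u : S, ∑ a : A, ∑ i ∈ t, F i u * π u a * P u a s)
      = ∑ u : S, ∑ i ∈ t, ∑ a : A, F i u * π u a * P u a s := by
        exact Finset.sum_congr rfl fun u _ => Finset.sum_comm
    _ = ∑ i ∈ t, ∑ u : S, ∑ a : A, F i u * π u a * P u a s := Finset.sum_comm

lemma step_sub (P : S → A → S → ℝ) (π : S → A → ℝ) (f g : S → ℝ) (s : S) :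
    step P π (fun u => f u - g u) s = step P π f s - step P π g s := by
  unfold step
  rw [← Finset.sum_sub_distrib]
  refine Finset.sum_congr rfl fun u _ => ?_
  rw [← Finset.sum_sub_distrib]
  exact Finset.sum_congr rfl fun a _ => by ring

lemma occ_layer_eq_reach (P : S → A → S → ℝ) (π : S → A → ℝ) (k : ℕ) :
    occLayer M P π k = reachLayer M P π M.s0 k := by
  induction k with
  | zero => rfl
  | succ k ih => funext s; show occLayer M P π (k+1) s = _; simp only [occLayer, ih]; rfl

lemma occ_eq_reach (P : S → A → S → ℝ) (π : S → A → ℝ) (s : S) :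
    occ M P π s = reachLayer M P π M.s0 (M.layer s) s := by
  rw [occ, occ_layer_eq_reach]

variable {M}

lemma reach_nonneg {P : S → A → S → ℝ} {π : S → A → ℝ}
    (hP : IsTransitionKernel M P) (hπ : IsPolicy π) (w : S) :
    ∀ (k : ℕ) (s : S), 0 ≤ reachLayer M P π w k s := by
  intro k
  induction k with
  | zero => intro s; simp only [reachLayer]; split <;> norm_num
  | succ k ih =>
      intro s
      refine Finset.sum_nonneg fun u _ => Finset.sum_nonneg fun a _ => ?_
      exact mul_nonneg (mul_nonneg (ih u) (hπ.1 u a)) (hP.1 u a s)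

lemma reach_supp {P : S → A → S → ℝ} {π : S → A → ℝ}
    (hP : IsTransitionKernel M P) (w : S) :
    ∀ (k : ℕ) (s : S), reachLayer M P π w k s ≠ 0 → M.layer s = M.layer w + k := by
  intro k
  induction k with
  | zero =>
      intro s hs
      simp only [reachLayer] at hs
      by_cases h : s = w
      · subst h; omega
      · simp [h] at hs
  | succ k ih =>
      intro s hs
      obtain ⟨u, -, hu⟩ := Finset.exists_ne_zero_of_sum_ne_zero hs
      obtain ⟨a, -, ha⟩ := Finset.exists_ne_zero_of_sum_ne_zero hu
      have h1 : reachLayer M P π w k u ≠ 0 := fun h => ha (by simp [h])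
      have h2 : P u a s ≠ 0 := fun h => ha (by simp [h])
      have := ih u h1
      have := hP.2.2 u a s h2
      omega

lemma row_sum_le_one {P : S → A → S → ℝ} (hP : IsTransitionKernel M P) (u : S) (a : A) :
    ∑ w : S, P u a w ≤ 1 := by
  by_cases h : M.layer u < M.H
  · exact le_of_eq (hP.2.1 u a h)
  · have : ∀ w : S, P u a w = 0 := by
      intro w
      by_contra hc
      have h1 := hP.2.2 u a w hc
      have h2 := M.layer_le w
      have h3 := M.layer_le u
      omega
    simp [this]

lemma P_le_one {P : S → A → S → ℝ} (hP : IsTransitionKernel M P) (u : S) (a : A) (w : S) :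
    P u a w ≤ 1 := by
  calc P u a w ≤ ∑ w' : S, P u a w' :=
        Finset.single_le_sum (fun w' _ => hP.1 u a w') (Finset.mem_univ w)
    _ ≤ 1 := row_sum_le_one hP u a

lemma reach_mass {P : S → A → S → ℝ} {π : S → A → ℝ}
    (hP : IsTransitionKernel M P) (hπ : IsPolicy π) (w : S) :
    ∀ k : ℕ, ∑ s : S, reachLayer M P π w k s ≤ 1 := by
  intro k
  induction k with
  | zero => simp [reachLayer]
  | succ k ih =>
      show (∑ s : S, ∑ u : S, ∑ a : A, reachLayer M P π w k u * π u a * P u a s) ≤ 1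
      rw [Finset.sum_comm]
      calc (∑ u : S, ∑ s : S, ∑ a : A, reachLayer M P π w k u * π u a * P u a s)
          = ∑ u : S, ∑ a : A, reachLayer M P π w k u * π u a * ∑ s : S, P u a s := by
            refine Finset.sum_congr rfl fun u _ => ?_
            rw [Finset.sum_comm]
            refine Finset.sum_congr rfl fun a _ => ?_
            rw [Finset.mul_sum]
        _ ≤ ∑ u : S, ∑ a : A, reachLayer M P π w k u * π u a * 1 := by
            refine Finset.sum_le_sum fun u _ => Finset.sum_le_sum fun a _ => ?_
            exact mul_le_mul_of_nonneg_left (row_sum_le_one hP u a)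
              (mul_nonneg (reach_nonneg hP hπ w k u) (hπ.1 u a))
        _ = ∑ u : S, reachLayer M P π w k u * ∑ a : A, π u a := by
            refine Finset.sum_congr rfl fun u _ => ?_
            rw [Finset.mul_sum]
            exact Finset.sum_congr rfl fun a _ => by ring
        _ = ∑ u : S, reachLayer M P π w k u := by
            refine Finset.sum_congr rfl fun u _ => ?_
            rw [hπ.2 u, mul_one]
        _ ≤ 1 := ih

lemma reach_le_one {P : S → A → S → ℝ} {π : S → A → ℝ}
    (hP : IsTransitionKernel M P) (hπ : IsPolicy π) (w : S) (k : ℕ) (s : S) :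
    reachLayer M P π w k s ≤ 1 := by
  calc reachLayer M P π w k s ≤ ∑ s' : S, reachLayer M P π w k s' :=
        Finset.single_le_sum (fun s' _ => reach_nonneg hP hπ w k s') (Finset.mem_univ s)
    _ ≤ 1 := reach_mass hP hπ w k

lemma CK (P : S → A → S → ℝ) (π : S → A → ℝ) (w : S) :
    ∀ (k j : ℕ) (s : S), reachLayer M P π w (j + k) s =
      ∑ x : S, reachLayer M P π w j x * reachLayer M P π x k s := by
  intro k
  induction k with
  | zero =>
      intro j s
      simp only [Nat.add_zero, reachLayer]
      rw [Finset.sum_congr rfl (fun x _ => by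
        rw [show (if s = x then (1:ℝ) else 0) = if x = s then 1 else 0 by
          by_cases h : s = x
          · subst h; simp
          · rw [if_neg h, if_neg (fun hc => h hc.symm)]])]
      simp
  | succ k ih =>
      intro j s
      show reachLayer M P π w ((j + k) + 1) s = _
      rw [reach_succ]
      have he : reachLayer M P π w (j + k) = fun u =>
          ∑ x : S, reachLayer M P π w j x * reachLayer M P π x k u := by
        funext u; exact ih j u
      rw [he, step_sum]
      refine Finset.sum_congr rfl fun x _ => ?_
      rw [show (fun u => reachLayer M P π w j x * reachLayer M P π x k u) =
        (fun u => reachLayer M P π w j x * (reachLayer M P π x k) u) from rfl,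
        step_const_mul]
      rfl

/-- The telescoping lemma. -/
lemma TEL (P Q : S → A → S → ℝ) (π : S → A → ℝ) (w0 : S) :
    ∀ (nn : ℕ) (s : S), reachLayer M Q π w0 nn s - reachLayer M P π w0 nn s =
      ∑ k ∈ range nn, ∑ u : S, ∑ a : A, ∑ w : S,
        reachLayer M Q π w0 k u * π u a * (Q u a w - P u a w) *
          reachLayer M P π w (nn - 1 - k) s := by
  intro nn
  induction nn with
  | zero => intro s; simp [reachLayer]
  | succ n ih =>
      intro s
      have hQ : reachLayer M Q π w0 (n+1) s =
          ∑ u : S, ∑ a : A, reachLayer M Q π w0 n u * π u a * Q u a s := rfl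
      have hP : reachLayer M P π w0 (n+1) s =
          ∑ u : S, ∑ a : A, reachLayer M P π w0 n u * π u a * P u a s := rfl
      have split : reachLayer M Q π w0 (n+1) s - reachLayer M P π w0 (n+1) s =
          (∑ u : S, ∑ a : A, reachLayer M Q π w0 n u * π u a * (Q u a s - P u a s)) +
          step P π (fun u => reachLayer M Q π w0 n u - reachLayer M P π w0 n u) s := by
        rw [hQ, hP]
        unfold step
        rw [← Finset.sum_sub_distrib, ← Finset.sum_add_distrib]
        refine Finset.sum_congr rfl fun u _ => ?_
        rw [← Finset.sum_sub_distrib, ← Finset.sum_add_distrib]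
        exact Finset.sum_congr rfl fun a _ => by ring
      rw [split]
      have hdiff : (fun u => reachLayer M Q π w0 n u - reachLayer M P π w0 n u) =
          (fun u => ∑ k ∈ range n, ∑ u' : S, ∑ a' : A, ∑ w' : S,
            reachLayer M Q π w0 k u' * π u' a' * (Q u' a' w' - P u' a' w') *
              reachLayer M P π w' (n - 1 - k) u) := by
        funext u; exact ih u
      rw [hdiff, step_sum]
      have hstep : ∀ k ∈ range n,
          step P π (fun u => ∑ u' : S, ∑ a' : A, ∑ w' : S,
            reachLayer M Q π w0 k u' * π u' a' * (Q u' a' w' - P u' a' w') *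
              reachLayer M P π w' (n - 1 - k) u) s =
          ∑ u' : S, ∑ a' : A, ∑ w' : S,
            reachLayer M Q π w0 k u' * π u' a' * (Q u' a' w' - P u' a' w') *
              reachLayer M P π w' (n - k) s := by
        intro k hk
        rw [step_sum]
        refine Finset.sum_congr rfl fun u' _ => ?_
        rw [step_sum]
        refine Finset.sum_congr rfl fun a' _ => ?_
        rw [step_sum]
        refine Finset.sum_congr rfl fun w' _ => ?_
        rw [show (fun u => reachLayer M Q π w0 k u' * π u' a' * (Q u' a' w' - P u' a' w') *
              reachLayer M P π w' (n - 1 - k) u) =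
            (fun u => (reachLayer M Q π w0 k u' * π u' a' * (Q u' a' w' - P u' a' w')) *
              (reachLayer M P π w' (n - 1 - k)) u) from by funext u; ring, step_const_mul]
        have : reachLayer M P π w' (n - 1 - k + 1) s = step P π (reachLayer M P π w' (n-1-k)) s := rfl
        rw [← this, show n - 1 - k + 1 = n - k from by
          have := Finset.mem_range.mp hk; omega]
      rw [Finset.sum_congr rfl hstep, Finset.sum_range_succ]
      have hlast : (∑ u : S, ∑ a : A, ∑ w : S,
          reachLayer M Q π w0 n u * π u a * (Q u a w - P u a w) *
            reachLayer M P π w (n + 1 - 1 - n) s) =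
          ∑ u : S, ∑ a : A, reachLayer M Q π w0 n u * π u a * (Q u a s - P u a s) := by
        refine Finset.sum_congr rfl fun u _ => Finset.sum_congr rfl fun a _ => ?_
        have h0 : n + 1 - 1 - n = 0 := by omega
        rw [h0]
        simp only [reachLayer, mul_ite, mul_one, mul_zero]
        rw [Finset.sum_ite_eq univ s
          (fun w => reachLayer M Q π w0 n u * π u a * (Q u a w - P u a w))]
        simp
      rw [hlast]
      have : ∀ k ∈ range n, (∑ u : S, ∑ a : A, ∑ w : S,
          reachLayer M Q π w0 k u * π u a * (Q u a w - P u a w) *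
            reachLayer M P π w (n + 1 - 1 - k) s) =
          ∑ u : S, ∑ a : A, ∑ w : S,
          reachLayer M Q π w0 k u * π u a * (Q u a w - P u a w) *
            reachLayer M P π w (n - k) s := by
        intro k hk
        have : n + 1 - 1 - k = n - k := by omega
        rw [this]
      rw [Finset.sum_congr rfl this]
      ring

-- PART2
lemma comm4 {α β γ δ : Type*} {N : Type*} [AddCommMonoid N]
    (sa : Finset α) (sb : Finset β) (sc : Finset γ) (sd : Finset δ)
    (f : α → β → γ → δ → N) :
    (∑ a ∈ sa, ∑ b ∈ sb, ∑ c ∈ sc, ∑ d ∈ sd, f a b c d) =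
      ∑ d ∈ sd, ∑ a ∈ sa, ∑ b ∈ sb, ∑ c ∈ sc, f a b c d := by
  calc (∑ a ∈ sa, ∑ b ∈ sb, ∑ c ∈ sc, ∑ d ∈ sd, f a b c d)
      = ∑ a ∈ sa, ∑ b ∈ sb, ∑ d ∈ sd, ∑ c ∈ sc, f a b c d := by
        exact Finset.sum_congr rfl fun a _ => Finset.sum_congr rfl fun b _ => Finset.sum_comm
    _ = ∑ a ∈ sa, ∑ d ∈ sd, ∑ b ∈ sb, ∑ c ∈ sc, f a b c d := by
        exact Finset.sum_congr rfl fun a _ => Finset.sum_comm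
    _ = ∑ d ∈ sd, ∑ a ∈ sa, ∑ b ∈ sb, ∑ c ∈ sc, f a b c d := Finset.sum_comm

/-- collapse a sum over layers using that only `k = layer u` contributes -/
lemma collapse {P : S → A → S → ℝ} {π : S → A → ℝ}
    (hP : IsTransitionKernel M P) (hπ : IsPolicy π)
    (m : ℕ) (f : ℕ → S → ℝ) (g : S → ℝ)
    (hf0 : ∀ k u, M.layer u ≠ k → f k u = 0)
    (hg : ∀ u, 0 ≤ g u)
    (hfg : ∀ u, M.layer u < m → f (M.layer u) u ≤ g u) :
    (∑ k ∈ range m, ∑ u : S, f k u) ≤ ∑ u : S, g u := by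
  rw [Finset.sum_comm]
  refine Finset.sum_le_sum fun u _ => ?_
  by_cases hu : M.layer u < m
  · rw [Finset.sum_eq_single_of_mem (M.layer u) (Finset.mem_range.mpr hu)
      (fun k _ hk => hf0 k u (fun hc => hk (hc ▸ rfl)))]
    · exact hfg u hu
  · rw [Finset.sum_eq_zero fun k hk => hf0 k u (by
      have := Finset.mem_range.mp hk; omega)]
    exact hg u

lemma shift_collapse {P : S → A → S → ℝ} {π : S → A → ℝ}
    (hP : IsTransitionKernel M P) (hπ : IsPolicy π)
    (e m : ℕ) (x : S) :
    (∑ k ∈ range m, reachLayer M P π M.s0 (e + k) x) ≤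
      reachLayer M P π M.s0 (M.layer x) x := by
  have hL0 : M.layer M.s0 = 0 := M.layer_s0
  have hzero : ∀ j : ℕ, M.layer x ≠ j → reachLayer M P π M.s0 j x = 0 := by
    intro j hj
    by_contra hc
    have := reach_supp hP M.s0 j x hc
    omega
  have hocc0 : 0 ≤ reachLayer M P π M.s0 (M.layer x) x := reach_nonneg hP hπ _ _ _
  calc (∑ k ∈ range m, reachLayer M P π M.s0 (e + k) x)
      ≤ ∑ k ∈ range m, (if k = M.layer x - e then
          (if e + (M.layer x - e) = M.layer x then
            reachLayer M P π M.s0 (M.layer x) x else 0) else 0) := by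
        refine Finset.sum_le_sum fun k _ => ?_
        by_cases h1 : e + k = M.layer x
        · rw [if_pos (by omega), if_pos (by omega), ← h1]
        · rw [hzero (e+k) (fun hc => h1 hc.symm)]
          split_ifs with h2 h3
          · omega
          · exact le_refl 0
          · exact le_refl 0
    _ ≤ reachLayer M P π M.s0 (M.layer x) x := by
        rw [Finset.sum_ite_eq' (range m) (M.layer x - e)]
        split_ifs with h1 h2
        · exact le_refl _
        · exact hocc0
        · exact hocc0

lemma sqrt_le_half {a b : ℝ} (ha : 0 ≤ a) (hb : 0 ≤ b) :
    Real.sqrt (a * b) ≤ (a + b) / 2 := by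
  have h := Real.sqrt_le_sqrt (show a * b ≤ ((a+b)/2)^2 by nlinarith [sq_nonneg (a-b)])
  rwa [Real.sqrt_sq (by positivity)] at h

lemma prod_bound {p q x y : ℝ} (hp0 : 0 ≤ p) (hp1 : p ≤ 1) (hq0 : 0 ≤ q) (hq1 : q ≤ 1)
    (hx : 0 < x) (hy : 0 < y) :
    min (4 * Real.sqrt (p*x) + 40/3 * x) 1 * min (4 * Real.sqrt (q*y) + 40/3 * y) 1 ≤
      300 * (p * y + q * x + x) := by
  have hpx : (0:ℝ) ≤ p * x := by positivity
  have hqy : (0:ℝ) ≤ q * y := by positivity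
  have hs1 : 0 ≤ Real.sqrt (p*x) := Real.sqrt_nonneg _
  have hs2 : 0 ≤ Real.sqrt (q*y) := Real.sqrt_nonneg _
  set m1 := min (4 * Real.sqrt (p*x) + 40/3 * x) 1 with hm1
  set m2 := min (4 * Real.sqrt (q*y) + 40/3 * y) 1 with hm2
  have hm1a : m1 ≤ 4 * Real.sqrt (p*x) + 40/3 * x := min_le_left _ _
  have hm1b : m1 ≤ 1 := min_le_right _ _
  have hm2a : m2 ≤ 4 * Real.sqrt (q*y) + 40/3 * y := min_le_left _ _
  have hm2b : m2 ≤ 1 := min_le_right _ _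
  have hm10 : 0 ≤ m1 := le_min (by positivity) one_pos.le
  have hm20 : 0 ≤ m2 := le_min (by positivity) one_pos.le
  have hqx : (0:ℝ) ≤ q * x := by positivity
  have hpy : (0:ℝ) ≤ p * y := by positivity
  rcases le_or_gt 1 x with hx1 | hx1
  · -- x ≥ 1 : m1 * m2 ≤ 1 ≤ x
    have h1 : m1 * m2 ≤ 1 := mul_le_one₀ hm1b hm20 hm2b
    linarith
  rcases le_or_gt 1 y with hy1 | hy1
  · -- y ≥ 1 : m1*m2 ≤ m1 ≤ 2(p+x) + 40/3 x ≤ 2 p y + 50/3 x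
    have hsq : Real.sqrt (p*x) ≤ (p + x)/2 := sqrt_le_half hp0 hx.le
    have h1 : m1 * m2 ≤ m1 * 1 := mul_le_mul_of_nonneg_left hm2b hm10
    have h3 : p ≤ p * y := le_mul_of_one_le_right hp0 hy1
    have h2 : m1 ≤ 2*(p+x) + 40/3*x := by linarith
    nlinarith [h1, h2, h3]
  · -- x < 1, y < 1
    have key1 : Real.sqrt (p*x) * Real.sqrt (q*y) ≤ (p*y + q*x)/2 := by
      rw [← Real.sqrt_mul hpx]
      calc Real.sqrt (p*x*(q*y)) = Real.sqrt ((p*y)*(q*x)) := by ring_nf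
        _ ≤ (p*y + q*x)/2 := sqrt_le_half (by positivity) (by positivity)
    have key2 : Real.sqrt (p*x) * y ≤ (p*y + x)/2 := by
      have h1 : Real.sqrt (p*x) * y = Real.sqrt (p*x*y^2) := by
        rw [Real.sqrt_mul hpx, Real.sqrt_sq hy.le]
      rw [h1]
      calc Real.sqrt (p*x*y^2) ≤ Real.sqrt ((p*y)*x) := by
            apply Real.sqrt_le_sqrt
            nlinarith [mul_le_mul_of_nonneg_left (show y^2 ≤ y from by nlinarith) hpx]
        _ ≤ (p*y + x)/2 := sqrt_le_half (by positivity) hx.le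
    have key3 : x * Real.sqrt (q*y) ≤ (q*x + x)/2 := by
      have h1 : Real.sqrt (q*y) ≤ (q + y)/2 := sqrt_le_half hq0 hy.le
      nlinarith
    have key4 : x * y ≤ x := by nlinarith
    have e1 : m1 * m2 ≤ (4 * Real.sqrt (p*x) + 40/3 * x) * (4 * Real.sqrt (q*y) + 40/3 * y) := by
      apply mul_le_mul hm1a hm2a hm20 (by positivity)
    calc m1 * m2 ≤ (4 * Real.sqrt (p*x) + 40/3 * x) * (4 * Real.sqrt (q*y) + 40/3 * y) := e1
      _ = 16*(Real.sqrt (p*x)*Real.sqrt (q*y)) + 160/3*(Real.sqrt (p*x)*y)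
          + 160/3*(x*Real.sqrt (q*y)) + 1600/9*(x*y) := by ring
      _ ≤ 300 * (p * y + q * x + x) := by linarith

lemma comm3 {α β γ : Type*} {N : Type*} [AddCommMonoid N]
    (sa : Finset α) (sb : Finset β) (sc : Finset γ) (f : α → β → γ → N) :
    (∑ a ∈ sa, ∑ b ∈ sb, ∑ c ∈ sc, f a b c) =
      ∑ c ∈ sc, ∑ a ∈ sa, ∑ b ∈ sb, f a b c := by
  calc (∑ a ∈ sa, ∑ b ∈ sb, ∑ c ∈ sc, f a b c)
      = ∑ a ∈ sa, ∑ c ∈ sc, ∑ b ∈ sb, f a b c := by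
        exact Finset.sum_congr rfl fun a _ => Finset.sum_comm
    _ = ∑ c ∈ sc, ∑ a ∈ sa, ∑ b ∈ sb, f a b c := Finset.sum_comm

lemma abs_sum_le {γ : Type*} (t : Finset γ) (f g : γ → ℝ)
    (h : ∀ i ∈ t, |f i| ≤ g i) : |∑ i ∈ t, f i| ≤ ∑ i ∈ t, g i :=
  (Finset.abs_sum_le_sum_abs f t).trans (Finset.sum_le_sum h)

lemma reach_succ_apply (M : LayeredMDP S) (P : S → A → S → ℝ) (π : S → A → ℝ)
    (w0 : S) (k : ℕ) (x : S) :
    reachLayer M P π w0 (k+1) x =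
      ∑ u : S, ∑ a : A, reachLayer M P π w0 k u * π u a * P u a x := rfl

end OPB


set_option maxHeartbeats 4000000 in
open OPB in
/-- **Occupancy measure perturbation bound.**
There is an absolute constant `c > 0` such that, in any episodic layered MDP with
true transition kernel `P`, horizon `H`, `S` states and `A` actions: for any policy
`π`, any `ι > 0`, any `n : 𝒮 × 𝒜 → ℝ_{≥1}`, and any transition kernel `P̃` respecting
the layered structure with
`|P̃(w|u,v) - P(w|u,v)| ≤ min (4 √(P(w|u,v) ι / n(u,v)) + 40ι/(3 n(u,v))) 1`
on all consecutive-layer triples `(u,v,w)`, it holds for every state `s` that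
`|μ^{P,π}(s) - μ^{P̃,π}(s)| ≤ c (∑_{(u,v,w)} μ^{P,π}(u,v) √(P(w|u,v) ι / n(u,v)) μ^{P,π}(s|w)
  + H S² ∑_{(u,v)} μ^{P,π}(u,v) ι / n(u,v))`,
where the first sum ranges over consecutive-layer triples. -/
theorem occupancy_perturbation_bound :
    ∃ c : ℝ, 0 < c ∧
      ∀ (S A : Type) [Fintype S] [Fintype A] [DecidableEq S]
        (M : LayeredMDP S) (P Ptil : S → A → S → ℝ),
        IsTransitionKernel M P → IsTransitionKernel M Ptil →
        ∀ (π : S → A → ℝ), IsPolicy π →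
        ∀ (ι : ℝ), 0 < ι →
        ∀ (n : S → A → ℝ), (∀ u v, 1 ≤ n u v) →
        (∀ u v w, M.layer w = M.layer u + 1 →
          |Ptil u v w - P u v w|
            ≤ min (4 * Real.sqrt (P u v w * ι / n u v) + 40 * ι / (3 * n u v)) 1) →
        ∀ s : S,
          |occ M P π s - occ M Ptil π s|
            ≤ c * ((∑ u : S, ∑ v : A, ∑ w : S,
                  if M.layer w = M.layer u + 1 then
                    occSA M P π u v * Real.sqrt (P u v w * ι / n u v)
                      * condOcc M P π w s
                  else 0)
                + M.H * (Fintype.card S : ℝ) ^ 2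
                    * ∑ u : S, ∑ v : A, occSA M P π u v * ι / n u v) := by
  refine ⟨1000, by norm_num, ?_⟩
  intro S A _ _ _ M P Ptil hP hPt π hπ ι hι n hn hb s
  have hn0 : ∀ u v, (0:ℝ) < n u v := fun u v => lt_of_lt_of_le one_pos (hn u v)
  have hx0 : ∀ (u : S) (a : A), 0 < ι / n u a := fun u a => div_pos hι (hn0 u a)
  have hcard : (1:ℝ) ≤ (Fintype.card S : ℝ) := by
    have : 0 < Fintype.card S := Fintype.card_pos_iff.mpr ⟨M.s0⟩
    exact_mod_cast this
  have hocc0 : ∀ u : S, 0 ≤ occ M P π u := fun u => by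
    rw [occ_eq_reach]; exact reach_nonneg hP hπ _ _ _
  have hoccSA0 : ∀ (u : S) (a : A), 0 ≤ occSA M P π u a :=
    fun u a => mul_nonneg (hocc0 u) (hπ.1 u a)
  have hcond0 : ∀ w x : S, 0 ≤ condOcc M P π w x := fun w x => by
    unfold condOcc; split
    · exact reach_nonneg hP hπ _ _ _
    · exact le_refl 0
  set h := M.layer s with hh
  set C := (Fintype.card S : ℝ) with hC
  set Sum1 := (∑ u : S, ∑ v : A, ∑ w : S,
      if M.layer w = M.layer u + 1 then
        occSA M P π u v * Real.sqrt (P u v w * ι / n u v) * condOcc M P π w s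
      else 0) with hSum1def
  set Psi := (∑ u : S, ∑ v : A, occSA M P π u v * ι / n u v) with hPsidef
  have hSum10 : 0 ≤ Sum1 := by
    rw [hSum1def]
    refine Finset.sum_nonneg fun u _ => Finset.sum_nonneg fun v _ =>
      Finset.sum_nonneg fun w _ => ?_
    split
    · exact mul_nonneg (mul_nonneg (hoccSA0 u v) (Real.sqrt_nonneg _)) (hcond0 w s)
    · exact le_refl 0
  have hPsi0 : 0 ≤ Psi := by
    rw [hPsidef]
    refine Finset.sum_nonneg fun u _ => Finset.sum_nonneg fun v _ => ?_
    exact div_nonneg (mul_nonneg (hoccSA0 u v) hι.le) (hn0 u v).le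
  rcases Nat.eq_zero_or_pos h with h0 | hpos
  · have heq : occ M P π s = occ M Ptil π s := by
      unfold occ
      rw [← hh, h0]
      simp [occLayer]
    rw [heq, sub_self, abs_zero]
    have hterm : 0 ≤ (M.H:ℝ) * C^2 * Psi := by
      have : (0:ℝ) ≤ (M.H:ℝ) := Nat.cast_nonneg _
      have hC0 : (0:ℝ) ≤ C := by linarith
      positivity
    nlinarith [hSum10, hterm]
  -- main case
  have hhH : h ≤ M.H := by rw [hh]; exact M.layer_le s
  have hH1 : (1:ℝ) ≤ (M.H:ℝ) := by exact_mod_cast (by omega : 1 ≤ M.H)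
  -- the exact identity
  have hID : occ M P π s - occ M Ptil π s =
      (∑ k ∈ Finset.range h, ∑ u : S, ∑ a : A, ∑ w : S,
        reachLayer M P π M.s0 k u * π u a * (P u a w - Ptil u a w) *
          reachLayer M P π w (h - 1 - k) s)
      - (∑ k ∈ Finset.range h, ∑ u : S, ∑ a : A, ∑ w : S,
        reachLayer M P π M.s0 k u * π u a * (P u a w - Ptil u a w) *
          (∑ k2 ∈ Finset.range (h - 1 - k), ∑ u2 : S, ∑ a2 : A, ∑ w2 : S,
            reachLayer M P π w k2 u2 * π u2 a2 * (P u2 a2 w2 - Ptil u2 a2 w2) *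
              reachLayer M Ptil π w2 (h - 1 - k - 1 - k2) s)) := by
    have e0 : occ M P π s - occ M Ptil π s =
        ∑ k ∈ Finset.range h, ∑ u : S, ∑ a : A, ∑ w : S,
          reachLayer M P π M.s0 k u * π u a * (P u a w - Ptil u a w) *
            reachLayer M Ptil π w (h - 1 - k) s := by
      rw [occ_eq_reach M P π s, occ_eq_reach M Ptil π s, ← hh]
      exact TEL Ptil P π M.s0 h s
    rw [e0, ← Finset.sum_sub_distrib]
    refine Finset.sum_congr rfl fun k _ => ?_
    rw [← Finset.sum_sub_distrib]
    refine Finset.sum_congr rfl fun u _ => ?_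
    rw [← Finset.sum_sub_distrib]
    refine Finset.sum_congr rfl fun a _ => ?_
    rw [← Finset.sum_sub_distrib]
    refine Finset.sum_congr rfl fun w _ => ?_
    rw [← mul_sub]
    congr 1
    have e1 := TEL (M := M) Ptil P π w (h - 1 - k) s
    linarith
  -- the first-order bound
  have hFb : (∑ k ∈ Finset.range h, ∑ u : S, ∑ a : A, ∑ w : S,
        |reachLayer M P π M.s0 k u * π u a * (P u a w - Ptil u a w) *
          reachLayer M P π w (h - 1 - k) s|)
      ≤ 4 * Sum1 + 40/3 * C * Psi := by
    have hpw : ∀ k ∈ Finset.range h, ∀ (u : S) (a : A) (w : S),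
        |reachLayer M P π M.s0 k u * π u a * (P u a w - Ptil u a w) *
          reachLayer M P π w (h - 1 - k) s|
        ≤ (if M.layer w = M.layer u + 1 then
              4 * (reachLayer M P π M.s0 k u *
                (π u a * (Real.sqrt (P u a w * ι / n u a) *
                  reachLayer M P π w (h - 1 - k) s))) else 0)
          + (if M.layer w = M.layer u + 1 then
              40/3 * (reachLayer M P π M.s0 k u * (π u a * (ι / n u a))) else 0) := by
      intro k _ u a w
      by_cases hL : M.layer w = M.layer u + 1
      · rw [if_pos hL, if_pos hL]
        have hA1 : 0 ≤ reachLayer M P π M.s0 k u := reach_nonneg hP hπ _ _ _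
        have hB1 : 0 ≤ π u a := hπ.1 u a
        have hr0 : 0 ≤ reachLayer M P π w (h - 1 - k) s := reach_nonneg hP hπ _ _ _
        have hr1 : reachLayer M P π w (h - 1 - k) s ≤ 1 := reach_le_one hP hπ _ _ _
        have hd : |P u a w - Ptil u a w| ≤
            4 * Real.sqrt (P u a w * ι / n u a) + 40/3 * (ι / n u a) := by
          rw [abs_sub_comm]
          refine (hb u a w hL).trans ((min_le_left _ _).trans (le_of_eq ?_))
          ring
        have e1 : |reachLayer M P π M.s0 k u * π u a * (P u a w - Ptil u a w) *
            reachLayer M P π w (h - 1 - k) s|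
            = reachLayer M P π M.s0 k u * π u a * |P u a w - Ptil u a w| *
              reachLayer M P π w (h - 1 - k) s := by
          rw [abs_mul, abs_mul, abs_mul, abs_of_nonneg hA1, abs_of_nonneg hB1,
            abs_of_nonneg hr0]
        rw [e1]
        have hc0 : 0 ≤ reachLayer M P π M.s0 k u * π u a := mul_nonneg hA1 hB1
        have hs0 : 0 ≤ Real.sqrt (P u a w * ι / n u a) := Real.sqrt_nonneg _
        have hx1 : 0 ≤ ι / n u a := (hx0 u a).le
        calc reachLayer M P π M.s0 k u * π u a * |P u a w - Ptil u a w| *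
              reachLayer M P π w (h - 1 - k) s
            ≤ reachLayer M P π M.s0 k u * π u a *
              (4 * Real.sqrt (P u a w * ι / n u a) + 40/3 * (ι / n u a)) *
              reachLayer M P π w (h - 1 - k) s :=
              mul_le_mul_of_nonneg_right (mul_le_mul_of_nonneg_left hd hc0) hr0
          _ = 4 * (reachLayer M P π M.s0 k u *
                (π u a * (Real.sqrt (P u a w * ι / n u a) *
                  reachLayer M P π w (h - 1 - k) s)))
              + (40/3 * (reachLayer M P π M.s0 k u * (π u a * (ι / n u a)))) *
                reachLayer M P π w (h - 1 - k) s := by ring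
          _ ≤ 4 * (reachLayer M P π M.s0 k u *
                (π u a * (Real.sqrt (P u a w * ι / n u a) *
                  reachLayer M P π w (h - 1 - k) s)))
              + 40/3 * (reachLayer M P π M.s0 k u * (π u a * (ι / n u a))) := by
              have h2 : (40/3 * (reachLayer M P π M.s0 k u * (π u a * (ι / n u a)))) *
                  reachLayer M P π w (h - 1 - k) s
                  ≤ (40/3 * (reachLayer M P π M.s0 k u * (π u a * (ι / n u a)))) * 1 := by
                refine mul_le_mul_of_nonneg_left hr1 ?_
                positivity
              rw [mul_one] at h2
              linarith
      · have hz1 : P u a w = 0 := by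
          by_contra hc; exact hL (hP.2.2 u a w hc)
        have hz2 : Ptil u a w = 0 := by
          by_contra hc; exact hL (hPt.2.2 u a w hc)
        rw [if_neg hL, if_neg hL, hz1, hz2]
        simp
    have hR00 : ∀ (k : ℕ) (u : S), M.layer u ≠ k → reachLayer M P π M.s0 k u = 0 := by
      intro k u hku
      by_contra hc
      have := reach_supp hP M.s0 k u hc
      rw [M.layer_s0] at this
      omega
    have hB1sum : (∑ k ∈ Finset.range h, ∑ u : S, ∑ a : A, ∑ w : S,
        if M.layer w = M.layer u + 1 then
          4 * (reachLayer M P π M.s0 k u *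
            (π u a * (Real.sqrt (P u a w * ι / n u a) *
              reachLayer M P π w (h - 1 - k) s))) else 0) ≤ 4 * Sum1 := by
      have hcol := collapse (M := M) hP hπ h
        (fun k u => ∑ a : A, ∑ w : S,
          if M.layer w = M.layer u + 1 then
            4 * (reachLayer M P π M.s0 k u *
              (π u a * (Real.sqrt (P u a w * ι / n u a) *
                reachLayer M P π w (h - 1 - k) s))) else 0)
        (fun u => ∑ a : A, ∑ w : S,
          4 * (if M.layer w = M.layer u + 1 then
            occSA M P π u a * Real.sqrt (P u a w * ι / n u a) * condOcc M P π w s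
          else 0))
        (by
          intro k u hku
          refine Finset.sum_eq_zero fun a _ => Finset.sum_eq_zero fun w _ => ?_
          rw [hR00 k u hku]
          split <;> ring)
        (by
          intro u
          refine Finset.sum_nonneg fun a _ => Finset.sum_nonneg fun w _ => ?_
          split_ifs with hL
          · exact mul_nonneg (by norm_num)
              (mul_nonneg (mul_nonneg (hoccSA0 u a) (Real.sqrt_nonneg _)) (hcond0 w s))
          · norm_num)
        (by
          intro u hu
          refine Finset.sum_le_sum fun a _ => Finset.sum_le_sum fun w _ => ?_
          by_cases hL : M.layer w = M.layer u + 1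
          · rw [if_pos hL, if_pos hL]
            apply le_of_eq
            have hws : M.layer w ≤ M.layer s := by omega
            have hsub : M.layer s - M.layer w = h - 1 - M.layer u := by omega
            simp only [condOcc, occSA]
            rw [if_pos hws, hsub, occ_eq_reach]
            ring
          · rw [if_neg hL, if_neg hL]
            norm_num)
      refine hcol.trans (le_of_eq ?_)
      rw [hSum1def, Finset.mul_sum]
      refine Finset.sum_congr rfl fun u _ => ?_
      rw [Finset.mul_sum]
      refine Finset.sum_congr rfl fun a _ => ?_
      rw [Finset.mul_sum]
    have hB2sum : (∑ k ∈ Finset.range h, ∑ u : S, ∑ a : A, ∑ w : S,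
        if M.layer w = M.layer u + 1 then
          40/3 * (reachLayer M P π M.s0 k u * (π u a * (ι / n u a))) else 0)
        ≤ 40/3 * C * Psi := by
      have hcol := collapse (M := M) hP hπ h
        (fun k u => ∑ a : A, ∑ w : S,
          if M.layer w = M.layer u + 1 then
            40/3 * (reachLayer M P π M.s0 k u * (π u a * (ι / n u a))) else 0)
        (fun u => ∑ a : A, 40/3 * C * (occSA M P π u a * ι / n u a))
        (by
          intro k u hku
          refine Finset.sum_eq_zero fun a _ => Finset.sum_eq_zero fun w _ => ?_
          rw [hR00 k u hku]
          split <;> ring)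
        (by
          intro u
          refine Finset.sum_nonneg fun a _ => ?_
          have := hoccSA0 u a
          have := (hx0 u a).le
          have hC0 : (0:ℝ) ≤ C := by linarith
          have : (0:ℝ) ≤ occSA M P π u a * ι / n u a :=
            div_nonneg (mul_nonneg (hoccSA0 u a) hι.le) (hn0 u a).le
          positivity)
        (by
          intro u hu
          refine Finset.sum_le_sum fun a _ => ?_
          calc (∑ w : S, if M.layer w = M.layer u + 1 then
                40/3 * (reachLayer M P π M.s0 (M.layer u) u * (π u a * (ι / n u a))) else 0)
              ≤ ∑ w : S,
                40/3 * (reachLayer M P π M.s0 (M.layer u) u * (π u a * (ι / n u a))) := by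
                refine Finset.sum_le_sum fun w _ => ?_
                split
                · exact le_refl _
                · have hA1 : 0 ≤ reachLayer M P π M.s0 (M.layer u) u :=
                    reach_nonneg hP hπ _ _ _
                  have hB1 : 0 ≤ π u a := hπ.1 u a
                  have hx1 : 0 ≤ ι / n u a := (hx0 u a).le
                  positivity
            _ = C * (40/3 * (reachLayer M P π M.s0 (M.layer u) u * (π u a * (ι / n u a)))) := by
                rw [Finset.sum_const, Finset.card_univ, nsmul_eq_mul]
            _ = 40/3 * C * (occSA M P π u a * ι / n u a) := by
                simp only [occSA]
                rw [← occ_eq_reach]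
                ring)
      refine hcol.trans (le_of_eq ?_)
      rw [hPsidef, Finset.mul_sum]
      refine Finset.sum_congr rfl fun u _ => ?_
      rw [Finset.mul_sum]
    calc (∑ k ∈ Finset.range h, ∑ u : S, ∑ a : A, ∑ w : S,
        |reachLayer M P π M.s0 k u * π u a * (P u a w - Ptil u a w) *
          reachLayer M P π w (h - 1 - k) s|)
        ≤ ∑ k ∈ Finset.range h, ∑ u : S, ∑ a : A, ∑ w : S,
          ((if M.layer w = M.layer u + 1 then
              4 * (reachLayer M P π M.s0 k u *
                (π u a * (Real.sqrt (P u a w * ι / n u a) *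
                  reachLayer M P π w (h - 1 - k) s))) else 0)
          + (if M.layer w = M.layer u + 1 then
              40/3 * (reachLayer M P π M.s0 k u * (π u a * (ι / n u a))) else 0)) := by
          refine Finset.sum_le_sum fun k hk => Finset.sum_le_sum fun u _ =>
            Finset.sum_le_sum fun a _ => Finset.sum_le_sum fun w _ => hpw k hk u a w
      _ = (∑ k ∈ Finset.range h, ∑ u : S, ∑ a : A, ∑ w : S,
          if M.layer w = M.layer u + 1 then
            4 * (reachLayer M P π M.s0 k u *
              (π u a * (Real.sqrt (P u a w * ι / n u a) *
                reachLayer M P π w (h - 1 - k) s))) else 0)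
        + (∑ k ∈ Finset.range h, ∑ u : S, ∑ a : A, ∑ w : S,
          if M.layer w = M.layer u + 1 then
            40/3 * (reachLayer M P π M.s0 k u * (π u a * (ι / n u a))) else 0) := by
          simp only [Finset.sum_add_distrib]
      _ ≤ 4 * Sum1 + 40/3 * C * Psi := add_le_add hB1sum hB2sum
  have hR00 : ∀ (k : ℕ) (u : S), M.layer u ≠ k → reachLayer M P π M.s0 k u = 0 := by
    intro k u hku
    by_contra hc
    have := reach_supp hP M.s0 k u hc
    rw [M.layer_s0] at this
    omega
  -- the second-order bound
  have hGb : (∑ k ∈ Finset.range h, ∑ u : S, ∑ a : A, ∑ w : S,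
        |reachLayer M P π M.s0 k u * π u a * (P u a w - Ptil u a w)| *
          (∑ k2 ∈ Finset.range (h - 1 - k), ∑ u2 : S, ∑ a2 : A, ∑ w2 : S,
            |reachLayer M P π w k2 u2 * π u2 a2 * (P u2 a2 w2 - Ptil u2 a2 w2) *
              reachLayer M Ptil π w2 (h - 1 - k - 1 - k2) s|))
      ≤ 900 * ((M.H:ℝ) * C^2 * Psi) := by
    have hC0 : (0:ℝ) ≤ C := by linarith
    have hH0 : (0:ℝ) ≤ (M.H:ℝ) := Nat.cast_nonneg _
    -- pointwise product bound
    have hpw2 : ∀ k ∈ Finset.range h, ∀ (u : S) (a : A) (w : S),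
        ∀ k2 ∈ Finset.range (h - 1 - k), ∀ (u2 : S) (a2 : A) (w2 : S),
        |reachLayer M P π M.s0 k u * π u a * (P u a w - Ptil u a w)| *
          |reachLayer M P π w k2 u2 * π u2 a2 * (P u2 a2 w2 - Ptil u2 a2 w2) *
              reachLayer M Ptil π w2 (h - 1 - k - 1 - k2) s|
        ≤ 300 * ((reachLayer M P π M.s0 k u * π u a * P u a w * reachLayer M P π w k2 u2 * (π u2 a2 * (ι / n u2 a2))) + (reachLayer M P π M.s0 k u * (π u a * (ι / n u a)) * (reachLayer M P π w k2 u2 * (π u2 a2 * P u2 a2 w2))) + (reachLayer M P π M.s0 k u * (π u a * (ι / n u a)) * (reachLayer M P π w k2 u2 * π u2 a2))) := by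
      intro k hk u a w k2 hk2 u2 a2 w2
      have hA1 : 0 ≤ reachLayer M P π M.s0 k u := reach_nonneg hP hπ _ _ _
      have hA2 : 0 ≤ reachLayer M P π w k2 u2 := reach_nonneg hP hπ _ _ _
      have hB1 : 0 ≤ π u a := hπ.1 u a
      have hB2 : 0 ≤ π u2 a2 := hπ.1 u2 a2
      have hx1 : 0 ≤ ι / n u a := (hx0 u a).le
      have hy1 : 0 ≤ ι / n u2 a2 := (hx0 u2 a2).le
      have hp0 : 0 ≤ P u a w := hP.1 u a w
      have hq0 : 0 ≤ P u2 a2 w2 := hP.1 u2 a2 w2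
      have hT1 : 0 ≤ reachLayer M P π M.s0 k u * π u a * P u a w * reachLayer M P π w k2 u2 * (π u2 a2 * (ι / n u2 a2)) :=
        mul_nonneg (mul_nonneg (mul_nonneg (mul_nonneg hA1 hB1) hp0) hA2)
          (mul_nonneg hB2 hy1)
      have hT2 : 0 ≤ reachLayer M P π M.s0 k u * (π u a * (ι / n u a)) * (reachLayer M P π w k2 u2 * (π u2 a2 * P u2 a2 w2)) :=
        mul_nonneg (mul_nonneg hA1 (mul_nonneg hB1 hx1))
          (mul_nonneg hA2 (mul_nonneg hB2 hq0))
      have hT3 : 0 ≤ reachLayer M P π M.s0 k u * (π u a * (ι / n u a)) * (reachLayer M P π w k2 u2 * π u2 a2) :=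
        mul_nonneg (mul_nonneg hA1 (mul_nonneg hB1 hx1)) (mul_nonneg hA2 hB2)
      by_cases hL1 : M.layer w = M.layer u + 1
      · by_cases hL2 : M.layer w2 = M.layer u2 + 1
        · have hrt0 : 0 ≤ reachLayer M Ptil π w2 (h - 1 - k - 1 - k2) s :=
            reach_nonneg hPt hπ _ _ _
          have hrt1 : reachLayer M Ptil π w2 (h - 1 - k - 1 - k2) s ≤ 1 :=
            reach_le_one hPt hπ _ _ _
          have e1 : |reachLayer M P π M.s0 k u * π u a * (P u a w - Ptil u a w)|
              = reachLayer M P π M.s0 k u * π u a * |P u a w - Ptil u a w| := by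
            rw [abs_mul, abs_mul, abs_of_nonneg hA1, abs_of_nonneg hB1]
          have e2 : |reachLayer M P π w k2 u2 * π u2 a2 * (P u2 a2 w2 - Ptil u2 a2 w2) *
              reachLayer M Ptil π w2 (h - 1 - k - 1 - k2) s|
              = reachLayer M P π w k2 u2 * π u2 a2 * |P u2 a2 w2 - Ptil u2 a2 w2| *
                reachLayer M Ptil π w2 (h - 1 - k - 1 - k2) s := by
            rw [abs_mul, abs_mul, abs_mul, abs_of_nonneg hA2, abs_of_nonneg hB2,
              abs_of_nonneg hrt0]
          rw [e1, e2]
          have hd1 : |P u a w - Ptil u a w| ≤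
              min (4 * Real.sqrt (P u a w * (ι / n u a)) + 40/3 * (ι / n u a)) 1 := by
            rw [abs_sub_comm]
            refine (hb u a w hL1).trans (le_of_eq ?_)
            congr 1
            rw [mul_div_assoc]
            ring
          have hd2 : |P u2 a2 w2 - Ptil u2 a2 w2| ≤
              min (4 * Real.sqrt (P u2 a2 w2 * (ι / n u2 a2)) + 40/3 * (ι / n u2 a2)) 1 := by
            rw [abs_sub_comm]
            refine (hb u2 a2 w2 hL2).trans (le_of_eq ?_)
            congr 1
            rw [mul_div_assoc]
            ring
          have hmin10 : (0:ℝ) ≤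
              min (4 * Real.sqrt (P u a w * (ι / n u a)) + 40/3 * (ι / n u a)) 1 :=
            le_min (by positivity) (by norm_num)
          have hdd : |P u a w - Ptil u a w| * |P u2 a2 w2 - Ptil u2 a2 w2| ≤
              300 * (P u a w * (ι / n u2 a2) + P u2 a2 w2 * (ι / n u a) + (ι / n u a)) :=
            (mul_le_mul hd1 hd2 (abs_nonneg _) hmin10).trans
              (prod_bound hp0 (P_le_one hP u a w) hq0 (P_le_one hP u2 a2 w2)
                (hx0 u a) (hx0 u2 a2))
          have hpre0 : 0 ≤ reachLayer M P π M.s0 k u * π u a *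
              (reachLayer M P π w k2 u2 * π u2 a2) :=
            mul_nonneg (mul_nonneg hA1 hB1) (mul_nonneg hA2 hB2)
          calc reachLayer M P π M.s0 k u * π u a * |P u a w - Ptil u a w| *
                (reachLayer M P π w k2 u2 * π u2 a2 * |P u2 a2 w2 - Ptil u2 a2 w2| *
                  reachLayer M Ptil π w2 (h - 1 - k - 1 - k2) s)
              = (reachLayer M P π M.s0 k u * π u a *
                  (reachLayer M P π w k2 u2 * π u2 a2) *
                  (|P u a w - Ptil u a w| * |P u2 a2 w2 - Ptil u2 a2 w2|)) *
                reachLayer M Ptil π w2 (h - 1 - k - 1 - k2) s := by ring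
            _ ≤ (reachLayer M P π M.s0 k u * π u a *
                  (reachLayer M P π w k2 u2 * π u2 a2) *
                  (|P u a w - Ptil u a w| * |P u2 a2 w2 - Ptil u2 a2 w2|)) * 1 := by
                refine mul_le_mul_of_nonneg_left hrt1 ?_
                exact mul_nonneg hpre0 (mul_nonneg (abs_nonneg _) (abs_nonneg _))
            _ = reachLayer M P π M.s0 k u * π u a *
                  (reachLayer M P π w k2 u2 * π u2 a2) *
                  (|P u a w - Ptil u a w| * |P u2 a2 w2 - Ptil u2 a2 w2|) := mul_one _
            _ ≤ reachLayer M P π M.s0 k u * π u a *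
                  (reachLayer M P π w k2 u2 * π u2 a2) *
                  (300 * (P u a w * (ι / n u2 a2) + P u2 a2 w2 * (ι / n u a) +
                    (ι / n u a))) := mul_le_mul_of_nonneg_left hdd hpre0
            _ = 300 * ((reachLayer M P π M.s0 k u * π u a * P u a w * reachLayer M P π w k2 u2 * (π u2 a2 * (ι / n u2 a2))) + (reachLayer M P π M.s0 k u * (π u a * (ι / n u a)) * (reachLayer M P π w k2 u2 * (π u2 a2 * P u2 a2 w2))) + (reachLayer M P π M.s0 k u * (π u a * (ι / n u a)) * (reachLayer M P π w k2 u2 * π u2 a2))) := by ring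
        · have hz1 : P u2 a2 w2 = 0 := by
            by_contra hc; exact hL2 (hP.2.2 u2 a2 w2 hc)
          have hz2 : Ptil u2 a2 w2 = 0 := by
            by_contra hc; exact hL2 (hPt.2.2 u2 a2 w2 hc)
          rw [hz1, hz2]
          simp only [sub_zero, mul_zero, zero_mul, abs_zero]
          have : (0:ℝ) ≤ (reachLayer M P π M.s0 k u * π u a * P u a w * reachLayer M P π w k2 u2 * (π u2 a2 * (ι / n u2 a2))) + (reachLayer M P π M.s0 k u * (π u a * (ι / n u a)) * (reachLayer M P π w k2 u2 * (π u2 a2 * P u2 a2 w2))) + (reachLayer M P π M.s0 k u * (π u a * (ι / n u a)) * (reachLayer M P π w k2 u2 * π u2 a2)) := by linarith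
          linarith
      · have hz1 : P u a w = 0 := by
          by_contra hc; exact hL1 (hP.2.2 u a w hc)
        have hz2 : Ptil u a w = 0 := by
          by_contra hc; exact hL1 (hPt.2.2 u a w hc)
        rw [hz1, hz2]
        simp only [sub_zero, mul_zero, zero_mul, abs_zero, sub_self]
        have : (0:ℝ) ≤ (reachLayer M P π M.s0 k u * π u a * P u a w * reachLayer M P π w k2 u2 * (π u2 a2 * (ι / n u2 a2))) + (reachLayer M P π M.s0 k u * (π u a * (ι / n u a)) * (reachLayer M P π w k2 u2 * (π u2 a2 * P u2 a2 w2))) + (reachLayer M P π M.s0 k u * (π u a * (ι / n u a)) * (reachLayer M P π w k2 u2 * π u2 a2)) := by linarith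
        linarith
    -- evaluation of the three second-order sums
    have hinner3 : ∀ k ∈ Finset.range h, ∀ (u : S) (a : A) (w : S),
        (∑ k2 ∈ Finset.range (h - 1 - k), ∑ u2 : S, ∑ a2 : A, ∑ w2 : S, reachLayer M P π M.s0 k u * (π u a * (ι / n u a)) * (reachLayer M P π w k2 u2 * π u2 a2))
        ≤ (M.H:ℝ) * (C * (reachLayer M P π M.s0 k u * (π u a * (ι / n u a)))) := by
      intro k hk u a w
      have hE0 : 0 ≤ reachLayer M P π M.s0 k u * (π u a * (ι / n u a)) :=
        mul_nonneg (reach_nonneg hP hπ _ _ _) (mul_nonneg (hπ.1 u a) (hx0 u a).le)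
      have hCE0 : 0 ≤ C * (reachLayer M P π M.s0 k u * (π u a * (ι / n u a))) := mul_nonneg hC0 hE0
      calc (∑ k2 ∈ Finset.range (h - 1 - k), ∑ u2 : S, ∑ a2 : A, ∑ w2 : S, reachLayer M P π M.s0 k u * (π u a * (ι / n u a)) * (reachLayer M P π w k2 u2 * π u2 a2))
          ≤ ∑ _k2 ∈ Finset.range (h - 1 - k), C * (reachLayer M P π M.s0 k u * (π u a * (ι / n u a))) := by
            refine Finset.sum_le_sum fun k2 _ => ?_
            have east : (∑ u2 : S, ∑ a2 : A, ∑ w2 : S, reachLayer M P π M.s0 k u * (π u a * (ι / n u a)) * (reachLayer M P π w k2 u2 * π u2 a2))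
                = ∑ u2 : S, (C * (reachLayer M P π M.s0 k u * (π u a * (ι / n u a)))) * reachLayer M P π w k2 u2 := by
              refine Finset.sum_congr rfl fun u2 _ => ?_
              calc (∑ a2 : A, ∑ w2 : S, reachLayer M P π M.s0 k u * (π u a * (ι / n u a)) * (reachLayer M P π w k2 u2 * π u2 a2))
                  = ∑ a2 : A, ((C * (reachLayer M P π M.s0 k u * (π u a * (ι / n u a)))) * reachLayer M P π w k2 u2) * π u2 a2 := by
                    refine Finset.sum_congr rfl fun a2 _ => ?_
                    rw [Finset.sum_const, Finset.card_univ, nsmul_eq_mul, ← hC]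
                    ring
                _ = ((C * (reachLayer M P π M.s0 k u * (π u a * (ι / n u a)))) * reachLayer M P π w k2 u2) * ∑ a2 : A, π u2 a2 :=
                    (Finset.mul_sum _ _ _).symm
                _ = (C * (reachLayer M P π M.s0 k u * (π u a * (ι / n u a)))) * reachLayer M P π w k2 u2 := by rw [hπ.2 u2, mul_one]
            rw [east, ← Finset.mul_sum]
            calc (C * (reachLayer M P π M.s0 k u * (π u a * (ι / n u a)))) * ∑ u2 : S, reachLayer M P π w k2 u2
                ≤ (C * (reachLayer M P π M.s0 k u * (π u a * (ι / n u a)))) * 1 :=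
                  mul_le_mul_of_nonneg_left (reach_mass hP hπ w k2) hCE0
              _ = C * (reachLayer M P π M.s0 k u * (π u a * (ι / n u a))) := mul_one _
        _ = ((h - 1 - k : ℕ) : ℝ) * (C * (reachLayer M P π M.s0 k u * (π u a * (ι / n u a)))) := by
            rw [Finset.sum_const, Finset.card_range, nsmul_eq_mul]
        _ ≤ (M.H:ℝ) * (C * (reachLayer M P π M.s0 k u * (π u a * (ι / n u a)))) := by
            refine mul_le_mul_of_nonneg_right ?_ hCE0
            exact Nat.cast_le.mpr (by omega)
    have hX3 : (∑ k ∈ Finset.range h, ∑ u : S, ∑ a : A, ∑ w : S,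
        ∑ k2 ∈ Finset.range (h - 1 - k), ∑ u2 : S, ∑ a2 : A, ∑ w2 : S, reachLayer M P π M.s0 k u * (π u a * (ι / n u a)) * (reachLayer M P π w k2 u2 * π u2 a2))
        ≤ (M.H:ℝ) * (C^2 * Psi) := by
      have hcol := collapse (M := M) hP hπ h
        (fun k u => ∑ a : A, C * ((M.H:ℝ) * (C * (reachLayer M P π M.s0 k u * (π u a * (ι / n u a))))))
        (fun u => ∑ a : A, (M.H:ℝ) * (C^2 * (occSA M P π u a * ι / n u a)))
        (by
          intro k u hku
          refine Finset.sum_eq_zero fun a _ => ?_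
          rw [hR00 k u hku]
          ring)
        (by
          intro u
          refine Finset.sum_nonneg fun a _ => ?_
          have hX0 : (0:ℝ) ≤ occSA M P π u a * ι / n u a :=
            div_nonneg (mul_nonneg (hoccSA0 u a) hι.le) (hn0 u a).le
          have : (0:ℝ) ≤ C^2 := by positivity
          exact mul_nonneg hH0 (mul_nonneg this hX0))
        (by
          intro u hu
          refine Finset.sum_le_sum fun a _ => le_of_eq ?_
          simp only [occSA]
          rw [occ_eq_reach]
          ring)
      calc (∑ k ∈ Finset.range h, ∑ u : S, ∑ a : A, ∑ w : S,
        ∑ k2 ∈ Finset.range (h - 1 - k), ∑ u2 : S, ∑ a2 : A, ∑ w2 : S, reachLayer M P π M.s0 k u * (π u a * (ι / n u a)) * (reachLayer M P π w k2 u2 * π u2 a2))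
          ≤ ∑ k ∈ Finset.range h, ∑ u : S, ∑ a : A, ∑ w : S, (M.H:ℝ) * (C * (reachLayer M P π M.s0 k u * (π u a * (ι / n u a)))) := by
            refine Finset.sum_le_sum fun k hk => Finset.sum_le_sum fun u _ =>
              Finset.sum_le_sum fun a _ => Finset.sum_le_sum fun w _ => hinner3 k hk u a w
        _ = ∑ k ∈ Finset.range h, ∑ u : S, ∑ a : A, C * ((M.H:ℝ) * (C * (reachLayer M P π M.s0 k u * (π u a * (ι / n u a))))) := by
            refine Finset.sum_congr rfl fun k _ => Finset.sum_congr rfl fun u _ =>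
              Finset.sum_congr rfl fun a _ => ?_
            rw [Finset.sum_const, Finset.card_univ, nsmul_eq_mul, ← hC]
        _ ≤ ∑ u : S, ∑ a : A, (M.H:ℝ) * (C^2 * (occSA M P π u a * ι / n u a)) := hcol
        _ = (M.H:ℝ) * (C^2 * Psi) := by
            rw [hPsidef]
            simp only [Finset.mul_sum]
    have hinner2 : ∀ k ∈ Finset.range h, ∀ (u : S) (a : A) (w : S),
        (∑ k2 ∈ Finset.range (h - 1 - k), ∑ u2 : S, ∑ a2 : A, ∑ w2 : S, reachLayer M P π M.s0 k u * (π u a * (ι / n u a)) * (reachLayer M P π w k2 u2 * (π u2 a2 * P u2 a2 w2)))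
        ≤ (M.H:ℝ) * (reachLayer M P π M.s0 k u * (π u a * (ι / n u a))) := by
      intro k hk u a w
      have hE0 : 0 ≤ reachLayer M P π M.s0 k u * (π u a * (ι / n u a)) :=
        mul_nonneg (reach_nonneg hP hπ _ _ _) (mul_nonneg (hπ.1 u a) (hx0 u a).le)
      calc (∑ k2 ∈ Finset.range (h - 1 - k), ∑ u2 : S, ∑ a2 : A, ∑ w2 : S, reachLayer M P π M.s0 k u * (π u a * (ι / n u a)) * (reachLayer M P π w k2 u2 * (π u2 a2 * P u2 a2 w2)))
          ≤ ∑ _k2 ∈ Finset.range (h - 1 - k), (reachLayer M P π M.s0 k u * (π u a * (ι / n u a))) := by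
            refine Finset.sum_le_sum fun k2 _ => ?_
            calc (∑ u2 : S, ∑ a2 : A, ∑ w2 : S, reachLayer M P π M.s0 k u * (π u a * (ι / n u a)) * (reachLayer M P π w k2 u2 * (π u2 a2 * P u2 a2 w2)))
                ≤ ∑ u2 : S, (reachLayer M P π M.s0 k u * (π u a * (ι / n u a))) * reachLayer M P π w k2 u2 := by
                  refine Finset.sum_le_sum fun u2 _ => ?_
                  calc (∑ a2 : A, ∑ w2 : S, reachLayer M P π M.s0 k u * (π u a * (ι / n u a)) * (reachLayer M P π w k2 u2 * (π u2 a2 * P u2 a2 w2)))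
                      ≤ ∑ a2 : A, ((reachLayer M P π M.s0 k u * (π u a * (ι / n u a))) * reachLayer M P π w k2 u2) * π u2 a2 := by
                        refine Finset.sum_le_sum fun a2 _ => ?_
                        calc (∑ w2 : S, reachLayer M P π M.s0 k u * (π u a * (ι / n u a)) * (reachLayer M P π w k2 u2 * (π u2 a2 * P u2 a2 w2)))
                            = (reachLayer M P π M.s0 k u * (π u a * (ι / n u a))) * (reachLayer M P π w k2 u2 *
                                (π u2 a2 * ∑ w2 : S, P u2 a2 w2)) := by
                              simp only [← Finset.mul_sum]
                          _ ≤ (reachLayer M P π M.s0 k u * (π u a * (ι / n u a))) * (reachLayer M P π w k2 u2 * (π u2 a2 * 1)) := by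
                              refine mul_le_mul_of_nonneg_left ?_ hE0
                              refine mul_le_mul_of_nonneg_left ?_ (reach_nonneg hP hπ _ _ _)
                              exact mul_le_mul_of_nonneg_left (row_sum_le_one hP u2 a2)
                                (hπ.1 u2 a2)
                          _ = ((reachLayer M P π M.s0 k u * (π u a * (ι / n u a))) * reachLayer M P π w k2 u2) * π u2 a2 := by ring
                    _ = ((reachLayer M P π M.s0 k u * (π u a * (ι / n u a))) * reachLayer M P π w k2 u2) * ∑ a2 : A, π u2 a2 :=
                        (Finset.mul_sum _ _ _).symm
                    _ = (reachLayer M P π M.s0 k u * (π u a * (ι / n u a))) * reachLayer M P π w k2 u2 := by rw [hπ.2 u2, mul_one]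
              _ = (reachLayer M P π M.s0 k u * (π u a * (ι / n u a))) * ∑ u2 : S, reachLayer M P π w k2 u2 := (Finset.mul_sum _ _ _).symm
              _ ≤ (reachLayer M P π M.s0 k u * (π u a * (ι / n u a))) * 1 := mul_le_mul_of_nonneg_left (reach_mass hP hπ w k2) hE0
              _ = reachLayer M P π M.s0 k u * (π u a * (ι / n u a)) := mul_one _
        _ = ((h - 1 - k : ℕ) : ℝ) * (reachLayer M P π M.s0 k u * (π u a * (ι / n u a))) := by
            rw [Finset.sum_const, Finset.card_range, nsmul_eq_mul]
        _ ≤ (M.H:ℝ) * (reachLayer M P π M.s0 k u * (π u a * (ι / n u a))) := by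
            refine mul_le_mul_of_nonneg_right ?_ hE0
            exact Nat.cast_le.mpr (by omega)
    have hX2 : (∑ k ∈ Finset.range h, ∑ u : S, ∑ a : A, ∑ w : S,
        ∑ k2 ∈ Finset.range (h - 1 - k), ∑ u2 : S, ∑ a2 : A, ∑ w2 : S, reachLayer M P π M.s0 k u * (π u a * (ι / n u a)) * (reachLayer M P π w k2 u2 * (π u2 a2 * P u2 a2 w2)))
        ≤ (M.H:ℝ) * (C * Psi) := by
      have hcol := collapse (M := M) hP hπ h
        (fun k u => ∑ a : A, C * ((M.H:ℝ) * (reachLayer M P π M.s0 k u * (π u a * (ι / n u a)))))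
        (fun u => ∑ a : A, (M.H:ℝ) * (C * (occSA M P π u a * ι / n u a)))
        (by
          intro k u hku
          refine Finset.sum_eq_zero fun a _ => ?_
          rw [hR00 k u hku]
          ring)
        (by
          intro u
          refine Finset.sum_nonneg fun a _ => ?_
          have hX0 : (0:ℝ) ≤ occSA M P π u a * ι / n u a :=
            div_nonneg (mul_nonneg (hoccSA0 u a) hι.le) (hn0 u a).le
          exact mul_nonneg hH0 (mul_nonneg hC0 hX0))
        (by
          intro u hu
          refine Finset.sum_le_sum fun a _ => le_of_eq ?_
          simp only [occSA]
          rw [occ_eq_reach]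
          ring)
      calc (∑ k ∈ Finset.range h, ∑ u : S, ∑ a : A, ∑ w : S,
        ∑ k2 ∈ Finset.range (h - 1 - k), ∑ u2 : S, ∑ a2 : A, ∑ w2 : S, reachLayer M P π M.s0 k u * (π u a * (ι / n u a)) * (reachLayer M P π w k2 u2 * (π u2 a2 * P u2 a2 w2)))
          ≤ ∑ k ∈ Finset.range h, ∑ u : S, ∑ a : A, ∑ w : S, (M.H:ℝ) * (reachLayer M P π M.s0 k u * (π u a * (ι / n u a))) := by
            refine Finset.sum_le_sum fun k hk => Finset.sum_le_sum fun u _ =>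
              Finset.sum_le_sum fun a _ => Finset.sum_le_sum fun w _ => hinner2 k hk u a w
        _ = ∑ k ∈ Finset.range h, ∑ u : S, ∑ a : A, C * ((M.H:ℝ) * (reachLayer M P π M.s0 k u * (π u a * (ι / n u a)))) := by
            refine Finset.sum_congr rfl fun k _ => Finset.sum_congr rfl fun u _ =>
              Finset.sum_congr rfl fun a _ => ?_
            rw [Finset.sum_const, Finset.card_univ, nsmul_eq_mul, ← hC]
        _ ≤ ∑ u : S, ∑ a : A, (M.H:ℝ) * (C * (occSA M P π u a * ι / n u a)) := hcol
        _ = (M.H:ℝ) * (C * Psi) := by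
            rw [hPsidef]
            simp only [Finset.mul_sum]
    have hX1 : (∑ k ∈ Finset.range h, ∑ u : S, ∑ a : A, ∑ w : S,
        ∑ k2 ∈ Finset.range (h - 1 - k), ∑ u2 : S, ∑ a2 : A, ∑ w2 : S, reachLayer M P π M.s0 k u * π u a * P u a w * reachLayer M P π w k2 u2 * (π u2 a2 * (ι / n u2 a2)))
        ≤ (M.H:ℝ) * (C * Psi) := by
      have hCPsi0 : 0 ≤ C * Psi := mul_nonneg hC0 hPsi0
      have hper : ∀ k ∈ Finset.range h,
          (∑ u : S, ∑ a : A, ∑ w : S,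
            ∑ k2 ∈ Finset.range (h - 1 - k), ∑ u2 : S, ∑ a2 : A, ∑ w2 : S, reachLayer M P π M.s0 k u * π u a * P u a w * reachLayer M P π w k2 u2 * (π u2 a2 * (ι / n u2 a2)))
          ≤ C * Psi := by
        intro k hk
        have ea : (∑ u : S, ∑ a : A, ∑ w : S,
              ∑ k2 ∈ Finset.range (h - 1 - k), ∑ u2 : S, ∑ a2 : A, ∑ w2 : S, reachLayer M P π M.s0 k u * π u a * P u a w * reachLayer M P π w k2 u2 * (π u2 a2 * (ι / n u2 a2)))
            = ∑ u : S, ∑ a : A, ∑ w : S,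
              ∑ k2 ∈ Finset.range (h - 1 - k), ∑ u2 : S, ∑ a2 : A, (C * (π u2 a2 * (ι / n u2 a2))) * (reachLayer M P π M.s0 k u * π u a * P u a w * reachLayer M P π w k2 u2) := by
          refine Finset.sum_congr rfl fun u _ => Finset.sum_congr rfl fun a _ =>
            Finset.sum_congr rfl fun w _ => Finset.sum_congr rfl fun k2 _ =>
            Finset.sum_congr rfl fun u2 _ => Finset.sum_congr rfl fun a2 _ => ?_
          rw [Finset.sum_const, Finset.card_univ, nsmul_eq_mul, ← hC]
          ring
        have eb : (∑ u : S, ∑ a : A, ∑ w : S,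
              ∑ k2 ∈ Finset.range (h - 1 - k), ∑ u2 : S, ∑ a2 : A, (C * (π u2 a2 * (ι / n u2 a2))) * (reachLayer M P π M.s0 k u * π u a * P u a w * reachLayer M P π w k2 u2))
            = ∑ k2 ∈ Finset.range (h - 1 - k), ∑ u : S, ∑ a : A, ∑ w : S,
              ∑ u2 : S, ∑ a2 : A, (C * (π u2 a2 * (ι / n u2 a2))) * (reachLayer M P π M.s0 k u * π u a * P u a w * reachLayer M P π w k2 u2) :=
          comm4 (univ : Finset S) (univ : Finset A) (univ : Finset S)
            (Finset.range (h - 1 - k)) (fun u a w k2 => ∑ u2 : S, ∑ a2 : A, (C * (π u2 a2 * (ι / n u2 a2))) * (reachLayer M P π M.s0 k u * π u a * P u a w * reachLayer M P π w k2 u2))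
        have ec : (∑ k2 ∈ Finset.range (h - 1 - k), ∑ u : S, ∑ a : A, ∑ w : S,
              ∑ u2 : S, ∑ a2 : A, (C * (π u2 a2 * (ι / n u2 a2))) * (reachLayer M P π M.s0 k u * π u a * P u a w * reachLayer M P π w k2 u2))
            = ∑ k2 ∈ Finset.range (h - 1 - k), ∑ u2 : S, ∑ u : S, ∑ a : A, ∑ w : S,
              ∑ a2 : A, (C * (π u2 a2 * (ι / n u2 a2))) * (reachLayer M P π M.s0 k u * π u a * P u a w * reachLayer M P π w k2 u2) :=
          Finset.sum_congr rfl fun k2 _ =>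
            comm4 (univ : Finset S) (univ : Finset A) (univ : Finset S)
              (univ : Finset S) (fun u a w u2 => ∑ a2 : A, (C * (π u2 a2 * (ι / n u2 a2))) * (reachLayer M P π M.s0 k u * π u a * P u a w * reachLayer M P π w k2 u2))
        have ed : (∑ k2 ∈ Finset.range (h - 1 - k), ∑ u2 : S, ∑ u : S, ∑ a : A, ∑ w : S,
              ∑ a2 : A, (C * (π u2 a2 * (ι / n u2 a2))) * (reachLayer M P π M.s0 k u * π u a * P u a w * reachLayer M P π w k2 u2))
            = ∑ k2 ∈ Finset.range (h - 1 - k), ∑ u2 : S, ∑ a2 : A, ∑ u : S, ∑ a : A,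
              ∑ w : S, (C * (π u2 a2 * (ι / n u2 a2))) * (reachLayer M P π M.s0 k u * π u a * P u a w * reachLayer M P π w k2 u2) :=
          Finset.sum_congr rfl fun k2 _ => Finset.sum_congr rfl fun u2 _ =>
            comm4 (univ : Finset S) (univ : Finset A) (univ : Finset S)
              (univ : Finset A) (fun u a w a2 => (C * (π u2 a2 * (ι / n u2 a2))) * (reachLayer M P π M.s0 k u * π u a * P u a w * reachLayer M P π w k2 u2))
        have ee : ∀ (k2 : ℕ) (u2 : S) (a2 : A),
            (∑ u : S, ∑ a : A, ∑ w : S, (C * (π u2 a2 * (ι / n u2 a2))) * (reachLayer M P π M.s0 k u * π u a * P u a w * reachLayer M P π w k2 u2))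
            = (C * (π u2 a2 * (ι / n u2 a2))) * reachLayer M P π M.s0 (k + 1 + k2) u2 := by
          intro k2 u2 a2
          calc (∑ u : S, ∑ a : A, ∑ w : S, (C * (π u2 a2 * (ι / n u2 a2))) * (reachLayer M P π M.s0 k u * π u a * P u a w * reachLayer M P π w k2 u2))
              = (C * (π u2 a2 * (ι / n u2 a2))) * ∑ u : S, ∑ a : A, ∑ w : S, (reachLayer M P π M.s0 k u * π u a * P u a w * reachLayer M P π w k2 u2) := by
                simp only [← Finset.mul_sum]
            _ = (C * (π u2 a2 * (ι / n u2 a2))) * ∑ w : S, ∑ u : S, ∑ a : A, (reachLayer M P π M.s0 k u * π u a * P u a w * reachLayer M P π w k2 u2) := by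
                rw [comm3 (univ : Finset S) (univ : Finset A) (univ : Finset S)
                  (fun u a w => reachLayer M P π M.s0 k u * π u a * P u a w * reachLayer M P π w k2 u2)]
            _ = (C * (π u2 a2 * (ι / n u2 a2))) * ∑ w : S, reachLayer M P π M.s0 (k + 1) w * reachLayer M P π w k2 u2 := by
                congr 1
                refine Finset.sum_congr rfl fun w _ => ?_
                have e' : (∑ u : S, ∑ a : A, (reachLayer M P π M.s0 k u * π u a * P u a w * reachLayer M P π w k2 u2))
                    = (∑ u : S, ∑ a : A, reachLayer M P π M.s0 k u * π u a * P u a w) * reachLayer M P π w k2 u2 := by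
                  rw [Finset.sum_mul]
                  exact Finset.sum_congr rfl fun u _ => by rw [Finset.sum_mul]
                rw [e', ← reach_succ_apply]
            _ = (C * (π u2 a2 * (ι / n u2 a2))) * reachLayer M P π M.s0 (k + 1 + k2) u2 := by
                rw [← CK P π M.s0 k2 (k + 1) u2]
        have hCy0 : ∀ (u2 : S) (a2 : A), (0:ℝ) ≤ C * (π u2 a2 * (ι / n u2 a2)) :=
          fun u2 a2 => mul_nonneg hC0 (mul_nonneg (hπ.1 u2 a2) (hx0 u2 a2).le)
        calc (∑ u : S, ∑ a : A, ∑ w : S,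
              ∑ k2 ∈ Finset.range (h - 1 - k), ∑ u2 : S, ∑ a2 : A, ∑ w2 : S, reachLayer M P π M.s0 k u * π u a * P u a w * reachLayer M P π w k2 u2 * (π u2 a2 * (ι / n u2 a2)))
            = ∑ k2 ∈ Finset.range (h - 1 - k), ∑ u2 : S, ∑ a2 : A, ∑ u : S, ∑ a : A,
              ∑ w : S, (C * (π u2 a2 * (ι / n u2 a2))) * (reachLayer M P π M.s0 k u * π u a * P u a w * reachLayer M P π w k2 u2) := by rw [ea, eb, ec, ed]
          _ = ∑ k2 ∈ Finset.range (h - 1 - k), ∑ u2 : S, ∑ a2 : A,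
              (C * (π u2 a2 * (ι / n u2 a2))) * reachLayer M P π M.s0 (k + 1 + k2) u2 := by
              refine Finset.sum_congr rfl fun k2 _ => Finset.sum_congr rfl fun u2 _ =>
                Finset.sum_congr rfl fun a2 _ => ee k2 u2 a2
          _ = ∑ u2 : S, ∑ a2 : A, ∑ k2 ∈ Finset.range (h - 1 - k),
              (C * (π u2 a2 * (ι / n u2 a2))) * reachLayer M P π M.s0 (k + 1 + k2) u2 :=
              (comm3 (univ : Finset S) (univ : Finset A) (Finset.range (h - 1 - k))
                (fun u2 a2 k2 => (C * (π u2 a2 * (ι / n u2 a2))) * reachLayer M P π M.s0 (k + 1 + k2) u2)).symm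
          _ ≤ ∑ u2 : S, ∑ a2 : A,
              (C * (π u2 a2 * (ι / n u2 a2))) * reachLayer M P π M.s0 (M.layer u2) u2 := by
              refine Finset.sum_le_sum fun u2 _ => Finset.sum_le_sum fun a2 _ => ?_
              rw [← Finset.mul_sum]
              exact mul_le_mul_of_nonneg_left
                (shift_collapse (M := M) hP hπ (k + 1) (h - 1 - k) u2) (hCy0 u2 a2)
          _ = C * Psi := by
              rw [hPsidef]
              simp only [Finset.mul_sum]
              refine Finset.sum_congr rfl fun u2 _ => Finset.sum_congr rfl fun a2 _ => ?_
              rw [← occ_eq_reach M P π u2]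
              simp only [occSA]
              ring
      calc (∑ k ∈ Finset.range h, ∑ u : S, ∑ a : A, ∑ w : S,
        ∑ k2 ∈ Finset.range (h - 1 - k), ∑ u2 : S, ∑ a2 : A, ∑ w2 : S, reachLayer M P π M.s0 k u * π u a * P u a w * reachLayer M P π w k2 u2 * (π u2 a2 * (ι / n u2 a2)))
          ≤ ∑ _k ∈ Finset.range h, C * Psi := Finset.sum_le_sum hper
        _ = (h : ℝ) * (C * Psi) := by
            rw [Finset.sum_const, Finset.card_range, nsmul_eq_mul]
        _ ≤ (M.H:ℝ) * (C * Psi) := by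
            refine mul_le_mul_of_nonneg_right ?_ hCPsi0
            exact Nat.cast_le.mpr hhH
    -- assemble hGb
    have hpush : (∑ k ∈ Finset.range h, ∑ u : S, ∑ a : A, ∑ w : S,
        |reachLayer M P π M.s0 k u * π u a * (P u a w - Ptil u a w)| *
          (∑ k2 ∈ Finset.range (h - 1 - k), ∑ u2 : S, ∑ a2 : A, ∑ w2 : S,
            |reachLayer M P π w k2 u2 * π u2 a2 * (P u2 a2 w2 - Ptil u2 a2 w2) *
              reachLayer M Ptil π w2 (h - 1 - k - 1 - k2) s|))
        = ∑ k ∈ Finset.range h, ∑ u : S, ∑ a : A, ∑ w : S,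
          ∑ k2 ∈ Finset.range (h - 1 - k), ∑ u2 : S, ∑ a2 : A, ∑ w2 : S,
            |reachLayer M P π M.s0 k u * π u a * (P u a w - Ptil u a w)| *
            |reachLayer M P π w k2 u2 * π u2 a2 * (P u2 a2 w2 - Ptil u2 a2 w2) *
              reachLayer M Ptil π w2 (h - 1 - k - 1 - k2) s| := by
      refine Finset.sum_congr rfl fun k _ => Finset.sum_congr rfl fun u _ =>
        Finset.sum_congr rfl fun a _ => Finset.sum_congr rfl fun w _ => ?_
      rw [Finset.mul_sum]
      refine Finset.sum_congr rfl fun k2 _ => ?_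
      rw [Finset.mul_sum]
      refine Finset.sum_congr rfl fun u2 _ => ?_
      rw [Finset.mul_sum]
      refine Finset.sum_congr rfl fun a2 _ => ?_
      rw [Finset.mul_sum]
    calc (∑ k ∈ Finset.range h, ∑ u : S, ∑ a : A, ∑ w : S,
        |reachLayer M P π M.s0 k u * π u a * (P u a w - Ptil u a w)| *
          (∑ k2 ∈ Finset.range (h - 1 - k), ∑ u2 : S, ∑ a2 : A, ∑ w2 : S,
            |reachLayer M P π w k2 u2 * π u2 a2 * (P u2 a2 w2 - Ptil u2 a2 w2) *
              reachLayer M Ptil π w2 (h - 1 - k - 1 - k2) s|))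
        = ∑ k ∈ Finset.range h, ∑ u : S, ∑ a : A, ∑ w : S,
          ∑ k2 ∈ Finset.range (h - 1 - k), ∑ u2 : S, ∑ a2 : A, ∑ w2 : S,
            |reachLayer M P π M.s0 k u * π u a * (P u a w - Ptil u a w)| *
            |reachLayer M P π w k2 u2 * π u2 a2 * (P u2 a2 w2 - Ptil u2 a2 w2) *
              reachLayer M Ptil π w2 (h - 1 - k - 1 - k2) s| := hpush
      _ ≤ ∑ k ∈ Finset.range h, ∑ u : S, ∑ a : A, ∑ w : S,
          ∑ k2 ∈ Finset.range (h - 1 - k), ∑ u2 : S, ∑ a2 : A, ∑ w2 : S,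
            300 * ((reachLayer M P π M.s0 k u * π u a * P u a w * reachLayer M P π w k2 u2 * (π u2 a2 * (ι / n u2 a2))) + (reachLayer M P π M.s0 k u * (π u a * (ι / n u a)) * (reachLayer M P π w k2 u2 * (π u2 a2 * P u2 a2 w2))) + (reachLayer M P π M.s0 k u * (π u a * (ι / n u a)) * (reachLayer M P π w k2 u2 * π u2 a2))) := by
          refine Finset.sum_le_sum fun k hk => Finset.sum_le_sum fun u _ =>
            Finset.sum_le_sum fun a _ => Finset.sum_le_sum fun w _ =>
            Finset.sum_le_sum fun k2 hk2 => Finset.sum_le_sum fun u2 _ =>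
            Finset.sum_le_sum fun a2 _ => Finset.sum_le_sum fun w2 _ =>
            hpw2 k hk u a w k2 hk2 u2 a2 w2
      _ = 300 * (∑ k ∈ Finset.range h, ∑ u : S, ∑ a : A, ∑ w : S,
          ∑ k2 ∈ Finset.range (h - 1 - k), ∑ u2 : S, ∑ a2 : A, ∑ w2 : S,
            ((reachLayer M P π M.s0 k u * π u a * P u a w * reachLayer M P π w k2 u2 * (π u2 a2 * (ι / n u2 a2))) + (reachLayer M P π M.s0 k u * (π u a * (ι / n u a)) * (reachLayer M P π w k2 u2 * (π u2 a2 * P u2 a2 w2))) + (reachLayer M P π M.s0 k u * (π u a * (ι / n u a)) * (reachLayer M P π w k2 u2 * π u2 a2)))) := by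
          simp only [← Finset.mul_sum]
      _ = 300 * ((∑ k ∈ Finset.range h, ∑ u : S, ∑ a : A, ∑ w : S,
        ∑ k2 ∈ Finset.range (h - 1 - k), ∑ u2 : S, ∑ a2 : A, ∑ w2 : S, (reachLayer M P π M.s0 k u * π u a * P u a w * reachLayer M P π w k2 u2 * (π u2 a2 * (ι / n u2 a2))))
          + (∑ k ∈ Finset.range h, ∑ u : S, ∑ a : A, ∑ w : S,
        ∑ k2 ∈ Finset.range (h - 1 - k), ∑ u2 : S, ∑ a2 : A, ∑ w2 : S, (reachLayer M P π M.s0 k u * (π u a * (ι / n u a)) * (reachLayer M P π w k2 u2 * (π u2 a2 * P u2 a2 w2))))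
          + (∑ k ∈ Finset.range h, ∑ u : S, ∑ a : A, ∑ w : S,
        ∑ k2 ∈ Finset.range (h - 1 - k), ∑ u2 : S, ∑ a2 : A, ∑ w2 : S, (reachLayer M P π M.s0 k u * (π u a * (ι / n u a)) * (reachLayer M P π w k2 u2 * π u2 a2)))) := by
          simp only [Finset.sum_add_distrib]
      _ ≤ 300 * ((M.H:ℝ) * (C * Psi) + (M.H:ℝ) * (C * Psi) + (M.H:ℝ) * (C^2 * Psi)) := by
          refine mul_le_mul_of_nonneg_left ?_ (by norm_num)
          exact add_le_add (add_le_add hX1 hX2) hX3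
      _ ≤ 900 * ((M.H:ℝ) * C^2 * Psi) := by
          have h0 : (0:ℝ) ≤ C^2 - C := by nlinarith [hcard]
          have h1 : C * Psi ≤ C^2 * Psi := by nlinarith [mul_nonneg h0 hPsi0]
          have h2 : (M.H:ℝ) * (C * Psi) ≤ (M.H:ℝ) * (C^2 * Psi) :=
            mul_le_mul_of_nonneg_left h1 hH0
          have e : (900:ℝ) * ((M.H:ℝ) * C^2 * Psi) =
              300 * ((M.H:ℝ) * (C^2 * Psi) + (M.H:ℝ) * (C^2 * Psi) +
                (M.H:ℝ) * (C^2 * Psi)) := by ring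
          rw [e]
          refine mul_le_mul_of_nonneg_left ?_ (by norm_num)
          linarith [h2]
  -- assembly
  rw [hID]
  have habsF : |(∑ k ∈ Finset.range h, ∑ u : S, ∑ a : A, ∑ w : S,
        reachLayer M P π M.s0 k u * π u a * (P u a w - Ptil u a w) *
          reachLayer M P π w (h - 1 - k) s)|
      ≤ ∑ k ∈ Finset.range h, ∑ u : S, ∑ a : A, ∑ w : S,
        |reachLayer M P π M.s0 k u * π u a * (P u a w - Ptil u a w) *
          reachLayer M P π w (h - 1 - k) s| := by
    refine abs_sum_le _ _ _ fun k _ => abs_sum_le _ _ _ fun u _ =>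
      abs_sum_le _ _ _ fun a _ => abs_sum_le _ _ _ fun w _ => le_refl _
  have habsG : |(∑ k ∈ Finset.range h, ∑ u : S, ∑ a : A, ∑ w : S,
        reachLayer M P π M.s0 k u * π u a * (P u a w - Ptil u a w) *
          (∑ k2 ∈ Finset.range (h - 1 - k), ∑ u2 : S, ∑ a2 : A, ∑ w2 : S,
            reachLayer M P π w k2 u2 * π u2 a2 * (P u2 a2 w2 - Ptil u2 a2 w2) *
              reachLayer M Ptil π w2 (h - 1 - k - 1 - k2) s))|
      ≤ ∑ k ∈ Finset.range h, ∑ u : S, ∑ a : A, ∑ w : S,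
        |reachLayer M P π M.s0 k u * π u a * (P u a w - Ptil u a w)| *
          (∑ k2 ∈ Finset.range (h - 1 - k), ∑ u2 : S, ∑ a2 : A, ∑ w2 : S,
            |reachLayer M P π w k2 u2 * π u2 a2 * (P u2 a2 w2 - Ptil u2 a2 w2) *
              reachLayer M Ptil π w2 (h - 1 - k - 1 - k2) s|) := by
    refine abs_sum_le _ _ _ fun k _ => abs_sum_le _ _ _ fun u _ =>
      abs_sum_le _ _ _ fun a _ => abs_sum_le _ _ _ fun w _ => ?_
    rw [abs_mul]
    refine mul_le_mul_of_nonneg_left ?_ (abs_nonneg _)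
    refine abs_sum_le _ _ _ fun k2 _ => abs_sum_le _ _ _ fun u2 _ =>
      abs_sum_le _ _ _ fun a2 _ => abs_sum_le _ _ _ fun w2 _ => le_refl _
  have hCP : C * Psi ≤ (M.H:ℝ) * C^2 * Psi := by
    have h1 : C ≤ (M.H:ℝ) * C^2 := by nlinarith
    exact mul_le_mul_of_nonneg_right h1 hPsi0
  calc |(∑ k ∈ Finset.range h, ∑ u : S, ∑ a : A, ∑ w : S,
        reachLayer M P π M.s0 k u * π u a * (P u a w - Ptil u a w) *
          reachLayer M P π w (h - 1 - k) s)
      - (∑ k ∈ Finset.range h, ∑ u : S, ∑ a : A, ∑ w : S,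
        reachLayer M P π M.s0 k u * π u a * (P u a w - Ptil u a w) *
          (∑ k2 ∈ Finset.range (h - 1 - k), ∑ u2 : S, ∑ a2 : A, ∑ w2 : S,
            reachLayer M P π w k2 u2 * π u2 a2 * (P u2 a2 w2 - Ptil u2 a2 w2) *
              reachLayer M Ptil π w2 (h - 1 - k - 1 - k2) s))|
      ≤ (4 * Sum1 + 40/3 * C * Psi) + 900 * ((M.H:ℝ) * C^2 * Psi) := by
        have := abs_sub (∑ k ∈ Finset.range h, ∑ u : S, ∑ a : A, ∑ w : S,
          reachLayer M P π M.s0 k u * π u a * (P u a w - Ptil u a w) *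
            reachLayer M P π w (h - 1 - k) s)
          (∑ k ∈ Finset.range h, ∑ u : S, ∑ a : A, ∑ w : S,
          reachLayer M P π M.s0 k u * π u a * (P u a w - Ptil u a w) *
            (∑ k2 ∈ Finset.range (h - 1 - k), ∑ u2 : S, ∑ a2 : A, ∑ w2 : S,
              reachLayer M P π w k2 u2 * π u2 a2 * (P u2 a2 w2 - Ptil u2 a2 w2) *
                reachLayer M Ptil π w2 (h - 1 - k - 1 - k2) s))
        linarith [this, habsF, habsG, hFb, hGb]
    _ ≤ 1000 * (Sum1 + (M.H:ℝ) * C^2 * Psi) := by nlinarith [hSum10, hPsi0, hCP]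
end

section
/- Let R ∈ ℝ and C, U, K ≥ 0. Suppose that for every α ∈ (0, 1/4], R ≤ 2α(R + C) + U/α + K. Then R ≤ 24U + 6√(UC) + 2K. -/
/-- **Abstract self-bounding step.**
Let `R ∈ ℝ` and `C, U, K ≥ 0`.  If `R ≤ 2α(R + C) + U/α + K` for every
`α ∈ (0, 1/4]`, then `R ≤ 24 U + 6 √(U C) + 2 K`. -/
theorem self_bounding
    (R C U K : ℝ) (hC : 0 ≤ C) (hU : 0 ≤ U) (hK : 0 ≤ K)
    (h : ∀ α : ℝ, 0 < α → α ≤ 1 / 4 → R ≤ 2 * α * (R + C) + U / α + K) :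
    R ≤ 24 * U + 6 * Real.sqrt (U * C) + 2 * K := by
  have hs : 0 ≤ Real.sqrt (U * C) := Real.sqrt_nonneg _
  -- key : R ≤ 4αC + 2U/α + 2K
  have key : ∀ α : ℝ, 0 < α → α ≤ 1/4 → R ≤ 4*α*C + 2*(U/α) + 2*K := by
    intro α hα hα4
    have h1 := h α hα hα4
    have hUα : 0 ≤ U/α := div_nonneg hU hα.le
    have h2 : (1 - 2*α) * R ≤ 2*α*C + U/α + K := by nlinarith
    have h3 : (1:ℝ)/2 ≤ 1 - 2*α := by linarith
    rcases le_or_gt R 0 with hR | hR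
    · nlinarith [mul_nonneg hα.le hC]
    · nlinarith [mul_le_mul_of_nonneg_right h3 hR.le]
  rcases le_or_gt C (8*U) with hc | hc
  · have k := key (1/4) (by norm_num) (by norm_num)
    have : 2*(U/(1/4)) = 8*U := by ring
    nlinarith
  · have hC' : 0 < C := by linarith
    rcases eq_or_lt_of_le hU with hU0 | hU'
    · -- U = 0
      have hR2K : R ≤ 2*K := by
        apply le_of_forall_pos_le_add
        intro ε hε
        set α := min (1/4) (ε/(4*C)) with hαdef
        have hα : 0 < α := lt_min (by norm_num) (by positivity)
        have k := key α hα (min_le_left _ _)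
        have h4 : 4*α*C ≤ ε := by
          have : α ≤ ε/(4*C) := min_le_right _ _
          calc 4*α*C ≤ 4*(ε/(4*C))*C := by nlinarith
            _ = ε := by field_simp
        have : U/α = 0 := by rw [← hU0]; simp
        rw [this] at k
        linarith
      nlinarith
    · -- U > 0
      set α := Real.sqrt (U/(2*C)) with hαdef
      have hα : 0 < α := Real.sqrt_pos.mpr (by positivity)
      have hα2 : α^2 = U/(2*C) := Real.sq_sqrt (by positivity)
      have hα4 : α ≤ 1/4 := by
        have h16 : U/(2*C) ≤ 1/16 := by
          rw [div_le_div_iff₀ (by positivity) (by norm_num)]; nlinarith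
        calc α ≤ Real.sqrt (1/16) := Real.sqrt_le_sqrt h16
          _ = 1/4 := by
            rw [show (1:ℝ)/16 = (1/4)^2 by norm_num, Real.sqrt_sq (by norm_num)]
      have k := key α hα hα4
      have hUeq : U = 2*C*α^2 := by rw [hα2]; field_simp
      have hUα : U/α = 2*C*α := by rw [hUeq]; field_simp
      rw [hUα] at k
      -- now R ≤ 8Cα + 2K; show 8Cα ≤ 6√(UC)
      have hs2 : (Real.sqrt (U*C))^2 = U*C := Real.sq_sqrt (by positivity)
      have hfin : 8*C*α ≤ 6*Real.sqrt (U*C) := by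
        nlinarith [sq_nonneg (6*Real.sqrt (U*C) - 8*C*α), mul_pos hC' hα, hU'.le]
      nlinarith
end
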